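/- arXiv:2603.09087 — 9 statements merged into one kernel-verified Lean document; each statement's English description precedes it below -/
import Mathlib

section
/- There exists a constant C > 0, depending only on i_a and s_a, such that for all ξ, η ∈ ℝⁿ with (ξ,η) ≠ (0,0) and every ε ∈ (0,1), one has G(|ξ−η|) ≤ C·ε^{(i_a−1)/(1+i_a)} · (g(|ξ|+|η|)/(|ξ|+|η|)) · |ξ−η|² + ε·G(|η|). -/
open MeasureTheory Real Set Filter

/-- Almost-monotonicity of `g t / t^ia`: `g a ≤ (a/b)^ia * g b` for `0 < a ≤ b`. -/
lemma stmt6_aux_ratio (ia : ℝ) (hia : 0 < ia) (g g' : ℝ → ℝ)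
    (hderiv : ∀ t > (0:ℝ), HasDerivAt g (g' t) t)
    (hgpos : ∀ t > (0:ℝ), 0 < g t)
    (hquot : ∀ t > (0:ℝ), ia ≤ t * g' t / g t)
    {a b : ℝ} (ha : 0 < a) (hab : a ≤ b) :
    g a ≤ (a / b) ^ ia * g b := by
  have hb : 0 < b := ha.trans_le hab
  set ψ : ℝ → ℝ := fun t => Real.log (g t) - ia * Real.log t with hψ
  have hψd : ∀ t ∈ Ioi (0:ℝ), HasDerivAt ψ (g' t / g t - ia * t⁻¹) t := by
    intro t ht
    exact ((hderiv t ht).log (hgpos t ht).ne').sub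
      ((Real.hasDerivAt_log (ne_of_gt ht)).const_mul ia)
  have hmono : MonotoneOn ψ (Ioi 0) := by
    apply monotoneOn_of_deriv_nonneg (convex_Ioi 0)
    · intro t ht
      exact (hψd t ht).continuousAt.continuousWithinAt
    · rw [interior_Ioi]
      intro t ht
      exact (hψd t ht).differentiableAt.differentiableWithinAt
    · rw [interior_Ioi]
      intro t ht
      rw [(hψd t ht).deriv]
      have ht' : (0:ℝ) < t := ht
      have hg := hgpos t ht'
      have h1 := hquot t ht'
      rw [sub_nonneg]
      have h2 : ia * t⁻¹ ≤ (t * g' t / g t) * t⁻¹ :=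
        mul_le_mul_of_nonneg_right h1 (inv_nonneg.mpr ht'.le)
      have h3 : (t * g' t / g t) * t⁻¹ = g' t / g t := by
        field_simp
      linarith
  have hab' : ψ a ≤ ψ b := hmono (mem_Ioi.mpr ha) (mem_Ioi.mpr hb) hab
  have hlog : Real.log (g a) ≤ ia * Real.log (a / b) + Real.log (g b) := by
    rw [Real.log_div ha.ne' hb.ne']
    simp only [hψ] at hab'
    linarith
  calc g a = Real.exp (Real.log (g a)) := (Real.exp_log (hgpos a ha)).symm
    _ ≤ Real.exp (ia * Real.log (a / b) + Real.log (g b)) := Real.exp_le_exp.mpr hlog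
    _ = (a / b) ^ ia * g b := by
        rw [Real.exp_add, Real.exp_log (hgpos b hb),
          Real.rpow_def_of_pos (div_pos ha hb), mul_comm (Real.log _) ia]

lemma stmt6_aux_g0 (ia : ℝ) (hia : 0 < ia) (g g' : ℝ → ℝ)
    (hcont : ContinuousOn g (Set.Ici 0))
    (hderiv : ∀ t > (0:ℝ), HasDerivAt g (g' t) t)
    (hg0 : ∀ t ≥ (0:ℝ), 0 ≤ g t)
    (hgpos : ∀ t > (0:ℝ), 0 < g t)
    (hquot : ∀ t > (0:ℝ), ia ≤ t * g' t / g t) :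
    g 0 = 0 := by
  have h1 : Tendsto g (nhdsWithin 0 (Ioi 0)) (nhds (g 0)) :=
    ((hcont 0 (mem_Ici.mpr le_rfl)).mono_left (nhdsWithin_mono 0 Ioi_subset_Ici_self))
  have h2 : Tendsto (fun τ : ℝ => τ ^ ia * g 1) (nhdsWithin 0 (Ioi 0)) (nhds 0) := by
    have : Tendsto (fun τ : ℝ => τ ^ ia) (nhds 0) (nhds ((0:ℝ) ^ ia)) :=
      (Real.continuousAt_rpow_const 0 ia (Or.inr hia.le)).tendsto
    rw [Real.zero_rpow hia.ne'] at this
    have h3 := (this.mul_const (g 1)).mono_left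
      (nhdsWithin_le_nhds (s := Ioi (0:ℝ)) (a := (0:ℝ)))
    simpa using h3
  have hle : g 0 ≤ 0 := by
    refine le_of_tendsto_of_tendsto h1 h2 ?_
    filter_upwards [Ioo_mem_nhdsGT_of_mem (by constructor <;> norm_num : (0:ℝ) ∈ Ico 0 1)]
      with τ hτ
    have := stmt6_aux_ratio ia hia g g' hderiv hgpos hquot hτ.1 hτ.2.le
    simpa using this
  exact le_antisymm hle (hg0 0 le_rfl)

/-- `G a ≤ (a/b)^(1+ia) * G b` for `0 < a ≤ b`. -/
lemma stmt6_aux_scale (ia : ℝ) (hia : 0 < ia) (g g' : ℝ → ℝ)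
    (hcont : ContinuousOn g (Set.Ici 0))
    (hderiv : ∀ t > (0:ℝ), HasDerivAt g (g' t) t)
    (hg0 : ∀ t ≥ (0:ℝ), 0 ≤ g t)
    (hgpos : ∀ t > (0:ℝ), 0 < g t)
    (hquot : ∀ t > (0:ℝ), ia ≤ t * g' t / g t)
    {a b : ℝ} (ha : 0 < a) (hab : a ≤ b) :
    (∫ τ in (0:ℝ)..a, g τ) ≤ (a / b) ^ (1 + ia) * ∫ τ in (0:ℝ)..b, g τ := by
  have hb : 0 < b := ha.trans_le hab
  set lam : ℝ := a / b with hlam_def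
  have hlam : 0 < lam := div_pos ha hb
  have hlam1 : lam ≤ 1 := (div_le_one hb).mpr hab
  have key : ∀ σ ∈ Icc (0:ℝ) b, g (lam * σ) ≤ lam ^ ia * g σ := by
    intro σ hσ
    rcases hσ.1.eq_or_lt with h | h
    · rw [← h, mul_zero, stmt6_aux_g0 ia hia g g' hcont hderiv hg0 hgpos hquot, mul_zero]
    · have h1 := stmt6_aux_ratio ia hia g g' hderiv hgpos hquot
        (a := lam * σ) (b := σ) (mul_pos hlam h) (by nlinarith)
      rwa [mul_div_assoc, div_self h.ne', mul_one] at h1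
  have hmaps : ∀ σ ∈ Icc (0:ℝ) b, lam * σ ∈ Ici (0:ℝ) :=
    fun σ hσ => mul_nonneg hlam.le hσ.1
  have int1 : IntervalIntegrable (fun σ => g (lam * σ)) volume 0 b := by
    apply ContinuousOn.intervalIntegrable
    rw [uIcc_of_le hb.le]
    exact hcont.comp ((continuous_const.mul continuous_id).continuousOn) hmaps
  have int2 : IntervalIntegrable (fun σ => lam ^ ia * g σ) volume 0 b := by
    apply ContinuousOn.intervalIntegrable
    rw [uIcc_of_le hb.le]
    exact (hcont.mono (Icc_subset_Ici_self)).const_smul (lam ^ ia)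
  have step := intervalIntegral.integral_mono_on hb.le int1 int2 key
  rw [intervalIntegral.integral_comp_mul_left g hlam.ne', intervalIntegral.integral_const_mul]
    at step
  have hlb : lam * b = a := div_mul_cancel₀ a hb.ne'
  rw [mul_zero, hlb, smul_eq_mul] at step
  have hrw : lam ^ (1 + ia) = lam * lam ^ ia := by
    rw [Real.rpow_add hlam, Real.rpow_one]
  rw [hrw]
  calc (∫ τ in (0:ℝ)..a, g τ) = lam * (lam⁻¹ * ∫ τ in (0:ℝ)..a, g τ) := by
        field_simp
    _ ≤ lam * (lam ^ ia * ∫ τ in (0:ℝ)..b, g τ) := by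
        exact mul_le_mul_of_nonneg_left step hlam.le
    _ = lam * lam ^ ia * ∫ τ in (0:ℝ)..b, g τ := by ring

/-- `G a ≤ a * g a` for `0 < a`. -/
lemma stmt6_aux_Gle (ia : ℝ) (hia : 0 < ia) (g g' : ℝ → ℝ)
    (hcont : ContinuousOn g (Set.Ici 0))
    (hderiv : ∀ t > (0:ℝ), HasDerivAt g (g' t) t)
    (hg0 : ∀ t ≥ (0:ℝ), 0 ≤ g t)
    (hgpos : ∀ t > (0:ℝ), 0 < g t)
    (hquot : ∀ t > (0:ℝ), ia ≤ t * g' t / g t)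
    {a : ℝ} (ha : 0 < a) :
    (∫ τ in (0:ℝ)..a, g τ) ≤ a * g a := by
  have key : ∀ τ ∈ Icc (0:ℝ) a, g τ ≤ g a := by
    intro τ hτ
    rcases hτ.1.eq_or_lt with h | h
    · rw [← h, stmt6_aux_g0 ia hia g g' hcont hderiv hg0 hgpos hquot]
      exact (hgpos a ha).le
    · have h1 := stmt6_aux_ratio ia hia g g' hderiv hgpos hquot h hτ.2
      have h2 : (τ / a) ^ ia ≤ 1 :=
        Real.rpow_le_one (div_nonneg h.le ha.le) ((div_le_one ha).mpr hτ.2) hia.le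
      nlinarith [(hgpos a ha).le]
  have int1 : IntervalIntegrable g volume 0 a := by
    apply ContinuousOn.intervalIntegrable
    rw [uIcc_of_le ha.le]
    exact hcont.mono Icc_subset_Ici_self
  have step := intervalIntegral.integral_mono_on ha.le int1
    (intervalIntegrable_const) key
  rwa [intervalIntegral.integral_const, sub_zero, smul_eq_mul] at step




/-- There is `C > 0` depending only on `i_a, s_a` such that for all admissible `g`,
all `n ≥ 1`, all `ξ, η ∈ ℝⁿ` with `(ξ,η) ≠ (0,0)` and all `ε ∈ (0,1)`,
`G(|ξ−η|) ≤ C ε^((i_a−1)/(1+i_a)) (g(|ξ|+|η|)/(|ξ|+|η|)) |ξ−η|² + ε G(|η|)`. -/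
theorem stmt6 (ia sa : ℝ) (hia : 0 < ia) (hisa : ia ≤ sa) (hsa : sa < 1) :
    ∃ C > (0:ℝ), ∀ (n : ℕ), 1 ≤ n → ∀ (g g' : ℝ → ℝ),
      ContinuousOn g (Set.Ici 0) →
      (∀ t > (0:ℝ), HasDerivAt g (g' t) t) →
      ContinuousOn g' (Set.Ici 0) →
      (∀ t ≥ (0:ℝ), 0 ≤ g t) →
      (∀ t > (0:ℝ), 0 < g t) →
      (∀ t > (0:ℝ), ia ≤ t * g' t / g t ∧ t * g' t / g t ≤ sa) →
      ∀ ξ η : EuclideanSpace ℝ (Fin n), ¬(ξ = 0 ∧ η = 0) →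
      ∀ ε : ℝ, 0 < ε → ε < 1 →
        (∫ τ in (0:ℝ)..‖ξ - η‖, g τ) ≤
          C * ε ^ ((ia - 1) / (1 + ia)) * (g (‖ξ‖ + ‖η‖) / (‖ξ‖ + ‖η‖)) * ‖ξ - η‖ ^ 2
            + ε * ∫ τ in (0:ℝ)..‖η‖, g τ := by
  have hia1 : (0:ℝ) < 1 + ia := by linarith
  have hia2 : ia < 1 := lt_of_le_of_lt hisa hsa
  refine ⟨3, by norm_num, ?_⟩
  intro n hn g g' hcont hderiv hcont' hg0 hgpos hquot ξ η hne ε hε hε1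
  have hquot' : ∀ t > (0:ℝ), ia ≤ t * g' t / g t := fun t ht => (hquot t ht).1
  set s : ℝ := ‖ξ - η‖ with hs_def
  set r : ℝ := ‖ξ‖ + ‖η‖ with hr_def
  have hr : 0 < r := by
    rcases eq_or_ne ξ 0 with h | h
    · have hη : η ≠ 0 := fun h' => hne ⟨h, h'⟩
      have := norm_pos_iff.mpr hη
      have := norm_nonneg ξ
      linarith
    · have := norm_pos_iff.mpr h
      have := norm_nonneg η
      linarith
  have hsr : s ≤ r := norm_sub_le ξ η
  have hGη : 0 ≤ ∫ τ in (0:ℝ)..‖η‖, g τ :=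
    intervalIntegral.integral_nonneg (norm_nonneg η) (fun u hu => hg0 u hu.1)
  have hgr : 0 < g r := hgpos r hr
  have hE : 0 < ε ^ ((ia - 1) / (1 + ia)) := Real.rpow_pos_of_pos hε _
  have ht2 : 0 ≤ ε * ∫ τ in (0:ℝ)..‖η‖, g τ := mul_nonneg hε.le hGη
  have ht1 : 0 ≤ 3 * ε ^ ((ia - 1) / (1 + ia)) * (g r / r) * s ^ 2 := by
    apply mul_nonneg (mul_nonneg (by positivity) (div_pos hgr hr).le) (sq_nonneg s)
  rcases (norm_nonneg (ξ - η)).eq_or_lt with hs0 | hs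
  · have hs0' : s = 0 := hs0.symm
    have hL : (∫ τ in (0:ℝ)..s, g τ) = 0 := by rw [hs0', intervalIntegral.integral_same]
    rw [hL]
    linarith
  -- s > 0 henceforth
  set δ : ℝ := ε ^ ((1:ℝ) / (1 + ia)) with hδ_def
  have hδ : 0 < δ := Real.rpow_pos_of_pos hε _
  have hδ1 : δ < 1 := Real.rpow_lt_one hε.le hε1 (by positivity)
  have hδε : δ ^ (1 + ia) = ε := by
    rw [hδ_def, ← Real.rpow_mul hε.le]
    rw [show (1:ℝ) / (1 + ia) * (1 + ia) = 1 by field_simp, Real.rpow_one]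
  rcases le_or_gt s (δ * ‖η‖) with h1 | h2
  · -- small case: s ≤ δ‖η‖
    have hη : 0 < ‖η‖ := by nlinarith [norm_nonneg η]
    have hsη : s ≤ ‖η‖ := by nlinarith
    have key := stmt6_aux_scale ia hia g g' hcont hderiv hg0 hgpos hquot' hs hsη
    have hb : (s / ‖η‖) ^ (1 + ia) ≤ ε := by
      calc (s / ‖η‖) ^ (1 + ia) ≤ δ ^ (1 + ia) :=
            Real.rpow_le_rpow (div_nonneg hs.le hη.le) ((div_le_iff₀ hη).mpr h1) hia1.le
        _ = ε := hδε
    have : (∫ τ in (0:ℝ)..s, g τ) ≤ ε * ∫ τ in (0:ℝ)..‖η‖, g τ :=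
      key.trans (mul_le_mul_of_nonneg_right hb hGη)
    linarith
  · -- large case: δ‖η‖ < s
    have hsδ : s ≤ s / δ := by
      rw [le_div_iff₀ hδ]; nlinarith
    have hηδ : ‖η‖ ≤ s / δ := by
      rw [le_div_iff₀ hδ]; nlinarith
    have hξn : ‖ξ‖ ≤ s + ‖η‖ := by
      calc ‖ξ‖ = ‖(ξ - η) + η‖ := by rw [sub_add_cancel]
        _ ≤ s + ‖η‖ := norm_add_le _ _
    have hrs : r ≤ 3 * (s / δ) := by
      rw [hr_def]; linarith
    have hsr' : 0 < s / r := div_pos hs hr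
    have hdr : δ / 3 ≤ s / r := by
      rw [div_le_div_iff₀ (by norm_num) hr]
      have h4 := mul_le_mul_of_nonneg_right hrs hδ.le
      rw [mul_assoc, div_mul_cancel₀ _ hδ.ne'] at h4
      linarith
    have hkey : (s / r) ^ (ia - 1) ≤ 3 * ε ^ ((ia - 1) / (1 + ia)) := by
      have h5 : (s / r) ^ (ia - 1) ≤ (δ / 3) ^ (ia - 1) :=
        Real.rpow_le_rpow_of_nonpos (by positivity) hdr (by linarith)
      have h6 : (δ / 3) ^ (ia - 1) = δ ^ (ia - 1) * ((3:ℝ) ^ ((1:ℝ) - ia)) := by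
        rw [Real.div_rpow hδ.le (by norm_num : (0:ℝ) ≤ 3), div_eq_mul_inv,
          ← Real.rpow_neg (by norm_num : (0:ℝ) ≤ 3)]
        norm_num
      have h7 : δ ^ (ia - 1) = ε ^ ((ia - 1) / (1 + ia)) := by
        rw [hδ_def, ← Real.rpow_mul hε.le]
        congr 1
        field_simp
      have h8 : (3:ℝ) ^ ((1:ℝ) - ia) ≤ 3 := by
        calc (3:ℝ) ^ ((1:ℝ) - ia) ≤ (3:ℝ) ^ (1:ℝ) :=
              Real.rpow_le_rpow_of_exponent_le (by norm_num) (by linarith)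
          _ = 3 := Real.rpow_one 3
      calc (s / r) ^ (ia - 1) ≤ (δ / 3) ^ (ia - 1) := h5
        _ = ε ^ ((ia - 1) / (1 + ia)) * ((3:ℝ) ^ ((1:ℝ) - ia)) := by rw [h6, h7]
        _ ≤ ε ^ ((ia - 1) / (1 + ia)) * 3 := mul_le_mul_of_nonneg_left h8 hE.le
        _ = 3 * ε ^ ((ia - 1) / (1 + ia)) := by ring
    have hpow : (s / r) ^ ia ≤ 3 * ε ^ ((ia - 1) / (1 + ia)) * (s / r) := by
      have h6 : (s / r) ^ ia = (s / r) ^ (ia - 1) * (s / r) := by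
        rw [← Real.rpow_add_one hsr'.ne' (ia - 1)]
        norm_num
      rw [h6]
      exact mul_le_mul_of_nonneg_right hkey hsr'.le
    have hA := stmt6_aux_Gle ia hia g g' hcont hderiv hg0 hgpos hquot' hs
    have hB := stmt6_aux_ratio ia hia g g' hderiv hgpos hquot' hs hsr
    have hmain : (∫ τ in (0:ℝ)..s, g τ) ≤
        3 * ε ^ ((ia - 1) / (1 + ia)) * (g r / r) * s ^ 2 := by
      calc (∫ τ in (0:ℝ)..s, g τ) ≤ s * g s := hA
        _ ≤ s * ((s / r) ^ ia * g r) := mul_le_mul_of_nonneg_left hB hs.le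
        _ ≤ s * ((3 * ε ^ ((ia - 1) / (1 + ia)) * (s / r)) * g r) :=
            mul_le_mul_of_nonneg_left (mul_le_mul_of_nonneg_right hpow hgr.le) hs.le
        _ = 3 * ε ^ ((ia - 1) / (1 + ia)) * (g r / r) * s ^ 2 := by
            field_simp
    linarith
end

section
/- There exist constants 0 < c ≤ C, depending only on i_a and s_a, such that for all ξ, η ∈ ℝⁿ with (ξ,η) ≠ (0,0): c·(g(|ξ|+|η|)/(|ξ|+|η|))·|ξ−η|² ≤ |V(ξ) − V(η)|² ≤ C·(g(|ξ|+|η|)/(|ξ|+|η|))·|ξ−η|². -/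
open MeasureTheory Real Set Filter

private lemma stmt8_g_mono {ia sa : ℝ} (hia : 0 < ia) {g g' : ℝ → ℝ}
    (hgd : ∀ t > (0:ℝ), HasDerivAt g (g' t) t)
    (hgpos : ∀ t > (0:ℝ), 0 < g t)
    (hind : ∀ t > (0:ℝ), ia ≤ t * g' t / g t ∧ t * g' t / g t ≤ sa) :
    MonotoneOn g (Set.Ioi 0) := by
  apply monotoneOn_of_deriv_nonneg (convex_Ioi 0)
    (fun t ht => ((hgd t ht).continuousAt.continuousWithinAt))
    (fun t ht => by
      rw [interior_Ioi] at ht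
      exact (hgd t ht).differentiableAt.differentiableWithinAt)
  intro t ht
  rw [interior_Ioi] at ht
  rw [(hgd t ht).deriv]
  have hg := hgpos t ht
  have h := (hind t ht).1
  rw [le_div_iff₀ hg] at h
  nlinarith [mul_pos hia hg, ht.out]

private lemma stmt8_gdiv_anti {ia sa : ℝ} (hsa : sa < 1) {g g' : ℝ → ℝ}
    (hgd : ∀ t > (0:ℝ), HasDerivAt g (g' t) t)
    (hgpos : ∀ t > (0:ℝ), 0 < g t)
    (hind : ∀ t > (0:ℝ), ia ≤ t * g' t / g t ∧ t * g' t / g t ≤ sa) :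
    AntitoneOn (fun t => g t / t) (Set.Ioi 0) := by
  have hder : ∀ t ∈ Set.Ioi (0:ℝ), HasDerivAt (fun s => g s / s) ((g' t * t - g t * 1) / t ^ 2) t :=
    fun t ht => (hgd t ht).div (hasDerivAt_id t) (ne_of_gt ht)
  apply antitoneOn_of_deriv_nonpos (convex_Ioi 0)
    (fun t ht => (hder t ht).continuousAt.continuousWithinAt)
    (fun t ht => by
      rw [interior_Ioi] at ht
      exact (hder t ht).differentiableAt.differentiableWithinAt)
  intro t ht
  rw [interior_Ioi] at ht
  rw [(hder t ht).deriv]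
  have hg := hgpos t ht
  have h := (hind t ht).2
  rw [div_le_iff₀ hg] at h
  apply div_nonpos_of_nonpos_of_nonneg
  · nlinarith
  · positivity

set_option maxHeartbeats 2000000 in
/-- Scalar core inequality at the level of norms, for `0 < b ≤ a`. -/
private lemma stmt8_key {g : ℝ → ℝ} (hm : MonotoneOn g (Set.Ioi 0))
    (hdv : AntitoneOn (fun t => g t / t) (Set.Ioi 0))
    (hgpos : ∀ t > (0:ℝ), 0 < g t)
    {a b u v τ : ℝ} (ha : 0 < a) (hb : 0 < b) (hba : b ≤ a)
    (hu : 0 ≤ u) (hv : 0 ≤ v) (hu2 : u ^ 2 = a * g a) (hv2 : v ^ 2 = b * g b)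
    (hτ : |τ| ≤ a * b) :
    1/4 * (g (a+b)/(a+b)) * (a^2 + b^2 - 2*τ) ≤ u^2 + v^2 - 2*(u*v/(a*b))*τ ∧
      u^2 + v^2 - 2*(u*v/(a*b))*τ ≤ 16 * (g (a+b)/(a+b)) * (a^2 + b^2 - 2*τ) := by
  have hab : 0 < a + b := by linarith
  set S := g (a+b)/(a+b) with hSdef
  have hga : 0 < g a := hgpos a ha
  have hgb : 0 < g b := hgpos b hb
  have hS : 0 < S := div_pos (hgpos _ hab) hab
  have hSab : S * (a+b) = g (a+b) := div_mul_cancel₀ _ (ne_of_gt hab)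
  have f3 : g a ≤ g (a+b) := hm ha (by exact hab) (by linarith)
  have f3' : g b ≤ g a := hm hb ha hba
  have f4 : S * a ≤ g a := by
    have := hdv ha (show (a+b) ∈ Set.Ioi (0:ℝ) from hab) (by linarith)
    rw [hSdef]
    calc S * a = g (a+b)/(a+b) * a := rfl
    _ ≤ g a / a * a := by apply mul_le_mul_of_nonneg_right this ha.le
    _ = g a := by field_simp
  have f5 : g a * b ≤ g b * a := by
    have := hdv hb ha hba
    rw [div_le_div_iff₀ ha hb] at this
    linarith
  -- F1 : u ^ 2 ≤ 2 * S * a ^ 2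
  have hF1 : u ^ 2 ≤ 2 * S * a ^ 2 := by
    rw [hu2]
    have h1 : a * g a ≤ a * g (a+b) := by nlinarith
    have h2 : a * g (a+b) = a * (S * (a+b)) := by rw [hSab]
    nlinarith
  -- F2 : S * a ^ 2 ≤ u ^ 2
  have hF2 : S * a ^ 2 ≤ u ^ 2 := by rw [hu2]; nlinarith
  have hvu : v ≤ u := by
    apply le_of_pow_le_pow_left₀ two_ne_zero hu
    rw [hu2, hv2]
    nlinarith [mul_nonneg (sub_nonneg.mpr hba) hga.le, mul_nonneg hb.le (sub_nonneg.mpr f3')]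
  -- endpoint estimates
  have hE1 : (u - v)^2 ≤ 16 * S * (a-b)^2 := by
    have h1 : u * b ≤ v * a := by
      apply le_of_pow_le_pow_left₀ two_ne_zero (by positivity)
      rw [mul_pow, mul_pow, hu2, hv2]
      nlinarith [mul_le_mul_of_nonneg_right f5 (le_of_lt (mul_pos ha hb))]
    have h2 : (u - v) * a ≤ u * (a - b) := by nlinarith
    have h3 : 0 ≤ u - v := by linarith
    have h4 : ((u - v) * a)^2 ≤ (u * (a-b))^2 := by
      apply pow_le_pow_left₀ (by positivity) h2
    nlinarith [sq_nonneg (a-b), mul_nonneg hS.le (sq_nonneg (a-b))]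
  have hE2 : 1/4 * S * (a-b)^2 ≤ (u - v)^2 := by
    have h1 : v * (2*a) ≤ u * (a + b) := by
      have hq : 4*(a*b)*g b ≤ (a+b)^2 * g a :=
        mul_le_mul (by nlinarith [sq_nonneg (a-b)]) f3' hgb.le (by positivity)
      apply le_of_pow_le_pow_left₀ two_ne_zero (by positivity)
      have e1 : (v * (2*a))^2 = 4*a^2*(b * g b) := by rw [mul_pow, hv2]; ring
      have e2 : (u * (a+b))^2 = (a * g a) * (a+b)^2 := by rw [mul_pow, hu2]
      rw [e1, e2]
      linarith [mul_le_mul_of_nonneg_left hq ha.le]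
    have h2 : u * (a - b) ≤ (u - v) * (2*a) := by nlinarith
    have h3 : 0 ≤ u - v := by linarith
    have h4 : (u * (a-b))^2 ≤ ((u - v) * (2*a))^2 :=
      pow_le_pow_left₀ (mul_nonneg hu (by linarith)) h2 2
    have h5 : S * a^2 * (a-b)^2 ≤ (u * (a-b))^2 := by
      rw [mul_pow]
      linarith [mul_le_mul_of_nonneg_right hF2 (sq_nonneg (a-b))]
    have h6 : S * a^2 * (a-b)^2 ≤ (u-v)^2 * (2*a)^2 := by
      calc S * a^2 * (a-b)^2 ≤ (u * (a-b))^2 := h5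
      _ ≤ ((u - v) * (2*a))^2 := h4
      _ = (u-v)^2 * (2*a)^2 := by ring
    nlinarith [h6, mul_pos ha ha, sq_nonneg (a-b)]
  have hE3 : (u + v)^2 ≤ 16 * S * (a+b)^2 := by
    have h1 : (u+v)^2 ≤ 4 * u^2 := by nlinarith
    have h2 : S * a^2 ≤ S * (a+b)^2 :=
      mul_le_mul_of_nonneg_left (by nlinarith) hS.le
    nlinarith
  have hE4 : 1/4 * S * (a+b)^2 ≤ (u + v)^2 := by
    have h2 : S * (a+b)^2 ≤ S * (4*a^2) :=
      mul_le_mul_of_nonneg_left (by nlinarith) hS.le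
    nlinarith [mul_nonneg hu hv]
  have hw : u * v / (a*b) * (a*b) = u * v := div_mul_cancel₀ _ (by positivity)
  obtain ⟨hτ1, hτ2⟩ := abs_le.mp hτ
  set w := u * v / (a*b) with hwdef
  have hwnn : 0 ≤ w := by positivity
  constructor
  · -- lower bound: A - K τ ≥ 0 with endpoints from hE2, hE4
    have e2 : u^2 + v^2 - 2*w*(a*b) ≥ 1/4 * S * (a^2 + b^2 - 2*(a*b)) := by nlinarith
    have e4 : u^2 + v^2 + 2*w*(a*b) ≥ 1/4 * S * (a^2 + b^2 + 2*(a*b)) := by nlinarith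
    rcases le_total 0 (2*w - 1/2*S) with hK | hK
    · nlinarith [mul_nonneg hK (sub_nonneg.mpr hτ2)]
    · nlinarith [mul_nonpos_of_nonpos_of_nonneg hK (by linarith : (0:ℝ) ≤ τ + a*b)]
  · have e1 : u^2 + v^2 - 2*w*(a*b) ≤ 16 * S * (a^2 + b^2 - 2*(a*b)) := by nlinarith
    have e3 : u^2 + v^2 + 2*w*(a*b) ≤ 16 * S * (a^2 + b^2 + 2*(a*b)) := by nlinarith
    rcases le_total 0 (2*w - 32*S) with hK | hK
    · nlinarith [mul_nonneg hK (sub_nonneg.mpr hτ2)]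
    · nlinarith [mul_nonpos_of_nonpos_of_nonneg hK (by linarith : (0:ℝ) ≤ τ + a*b)]

/-- There exist `0 < c ≤ C` depending only on `i_a, s_a` such that for all `n ≥ 1`,
all admissible `g` and all `ξ, η ∈ ℝⁿ` with `(ξ,η) ≠ (0,0)`:
`c (g(|ξ|+|η|)/(|ξ|+|η|)) |ξ−η|² ≤ |V(ξ) − V(η)|² ≤ C (g(|ξ|+|η|)/(|ξ|+|η|)) |ξ−η|²`. -/
theorem stmt8 (ia sa : ℝ) (hia : 0 < ia) (hisa : ia ≤ sa) (hsa : sa < 1) :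
    ∃ c C : ℝ, 0 < c ∧ c ≤ C ∧ ∀ (n : ℕ), 1 ≤ n → ∀ (g g' : ℝ → ℝ),
      ContinuousOn g (Set.Ici 0) →
      (∀ t > (0:ℝ), HasDerivAt g (g' t) t) →
      ContinuousOn g' (Set.Ici 0) →
      (∀ t ≥ (0:ℝ), 0 ≤ g t) →
      (∀ t > (0:ℝ), 0 < g t) →
      (∀ t > (0:ℝ), ia ≤ t * g' t / g t ∧ t * g' t / g t ≤ sa) →
      ∀ ξ η : EuclideanSpace ℝ (Fin n), ¬(ξ = 0 ∧ η = 0) →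
        c * (g (‖ξ‖ + ‖η‖) / (‖ξ‖ + ‖η‖)) * ‖ξ - η‖ ^ 2 ≤
            ‖(Real.sqrt (g ‖ξ‖ / ‖ξ‖) • ξ) - (Real.sqrt (g ‖η‖ / ‖η‖) • η)‖ ^ 2 ∧
          ‖(Real.sqrt (g ‖ξ‖ / ‖ξ‖) • ξ) - (Real.sqrt (g ‖η‖ / ‖η‖) • η)‖ ^ 2 ≤
            C * (g (‖ξ‖ + ‖η‖) / (‖ξ‖ + ‖η‖)) * ‖ξ - η‖ ^ 2 := by
  refine ⟨1/4, 16, by norm_num, by norm_num, ?_⟩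
  intro n hn g g' hgc hgd hg'c hg0 hgpos hind ξ η hne
  have hm := stmt8_g_mono hia hgd hgpos hind
  have hdv := stmt8_gdiv_anti hsa hgd hgpos hind
  by_cases hξ : ξ = 0
  · have hη : η ≠ 0 := fun h => hne ⟨hξ, h⟩
    subst hξ
    have hb : 0 < ‖η‖ := norm_pos_iff.mpr hη
    have hgb : 0 < g ‖η‖ := hgpos _ hb
    have h1 : ‖(Real.sqrt (g ‖(0:EuclideanSpace ℝ (Fin n))‖ / ‖(0:EuclideanSpace ℝ (Fin n))‖) • (0:EuclideanSpace ℝ (Fin n))) - (Real.sqrt (g ‖η‖ / ‖η‖) • η)‖ ^ 2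
        = ‖η‖ * g ‖η‖ := by
      rw [smul_zero, zero_sub, norm_neg, norm_smul, Real.norm_eq_abs,
        abs_of_nonneg (Real.sqrt_nonneg _), mul_pow, Real.sq_sqrt (by positivity)]
      field_simp
    rw [h1]
    have h2 : ‖(0:EuclideanSpace ℝ (Fin n)) - η‖ = ‖η‖ := by rw [zero_sub, norm_neg]
    rw [norm_zero, zero_add, h2]
    have h3 : g ‖η‖ / ‖η‖ * ‖η‖^2 = ‖η‖ * g ‖η‖ := by field_simp
    constructor <;> nlinarith
  · by_cases hη : η = 0
    · subst hη
      have ha : 0 < ‖ξ‖ := norm_pos_iff.mpr hξ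
      have hga : 0 < g ‖ξ‖ := hgpos _ ha
      have h1 : ‖(Real.sqrt (g ‖ξ‖ / ‖ξ‖) • ξ) - (Real.sqrt (g ‖(0:EuclideanSpace ℝ (Fin n))‖ / ‖(0:EuclideanSpace ℝ (Fin n))‖) • (0:EuclideanSpace ℝ (Fin n)))‖ ^ 2
          = ‖ξ‖ * g ‖ξ‖ := by
        rw [smul_zero, sub_zero, norm_smul, Real.norm_eq_abs,
          abs_of_nonneg (Real.sqrt_nonneg _), mul_pow, Real.sq_sqrt (by positivity)]
        field_simp
      rw [h1, norm_zero, add_zero, sub_zero]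
      have h3 : g ‖ξ‖ / ‖ξ‖ * ‖ξ‖^2 = ‖ξ‖ * g ‖ξ‖ := by field_simp
      constructor <;> nlinarith
    · -- main case
      have ha : 0 < ‖ξ‖ := norm_pos_iff.mpr hξ
      have hb : 0 < ‖η‖ := norm_pos_iff.mpr hη
      set a := ‖ξ‖ with hadef
      set b := ‖η‖ with hbdef
      set τ := (inner ℝ ξ η : ℝ) with hτdef
      have hga : 0 < g a := hgpos _ ha
      have hgb : 0 < g b := hgpos _ hb
      have hτab : |τ| ≤ a * b := abs_real_inner_le_norm ξ η
      set u := Real.sqrt (g a / a) * a with hudef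
      set v := Real.sqrt (g b / b) * b with hvdef
      have hu : 0 ≤ u := by positivity
      have hv : 0 ≤ v := by positivity
      have hu2 : u ^ 2 = a * g a := by
        rw [hudef, mul_pow, Real.sq_sqrt (by positivity)]; field_simp
      have hv2 : v ^ 2 = b * g b := by
        rw [hvdef, mul_pow, Real.sq_sqrt (by positivity)]; field_simp
      have hmid : Real.sqrt (g a / a) * Real.sqrt (g b / b) = u * v / (a * b) := by
        rw [hudef, hvdef]; field_simp
      have hnorm1 : ‖(Real.sqrt (g a / a) • ξ) - (Real.sqrt (g b / b) • η)‖ ^ 2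
          = u^2 + v^2 - 2*(u*v/(a*b))*τ := by
        rw [norm_sub_sq_real, real_inner_smul_left, real_inner_smul_right,
          norm_smul, norm_smul, Real.norm_eq_abs, Real.norm_eq_abs,
          abs_of_nonneg (Real.sqrt_nonneg _), abs_of_nonneg (Real.sqrt_nonneg _),
          mul_pow, mul_pow, ← hmid]
        rw [hτdef]
        ring
      have hnorm2 : ‖ξ - η‖ ^ 2 = a^2 + b^2 - 2*τ := by
        rw [norm_sub_sq_real]; ring
      rw [hnorm1, hnorm2]
      rcases le_total b a with hba | hab
      · exact stmt8_key hm hdv hgpos ha hb hba hu hv hu2 hv2 hτab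
      · have hτba : |τ| ≤ b * a := by rwa [mul_comm]
        obtain ⟨k1, k2⟩ := stmt8_key hm hdv hgpos hb ha hab hv hu hv2 hu2 hτba
        rw [add_comm b a] at k1 k2
        have hba' : b * a = a * b := mul_comm b a
        rw [hba'] at k1 k2
        constructor
        · calc 1/4 * (g (a+b)/(a+b)) * (a^2 + b^2 - 2*τ)
              = 1/4 * (g (a+b)/(a+b)) * (b^2 + a^2 - 2*τ) := by ring
          _ ≤ v^2 + u^2 - 2*(v*u/(a*b))*τ := k1
          _ = u^2 + v^2 - 2*(u*v/(a*b))*τ := by ring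
        · calc u^2 + v^2 - 2*(u*v/(a*b))*τ
              = v^2 + u^2 - 2*(v*u/(a*b))*τ := by ring
          _ ≤ 16 * (g (a+b)/(a+b)) * (b^2 + a^2 - 2*τ) := k2
          _ = 16 * (g (a+b)/(a+b)) * (a^2 + b^2 - 2*τ) := by ring
end

section
/- There exist constants 0 < c ≤ C, depending only on i_a and s_a, such that for all ξ, η ∈ ℝⁿ with (ξ,η) ≠ (0,0): c·√(g(|ξ|+|η|)/(|ξ|+|η|))·|ξ−η|² ≤ (V(ξ) − V(η)) · (ξ − η) ≤ C·√(g(|ξ|+|η|)/(|ξ|+|η|))·|ξ−η|². -/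
open MeasureTheory Real Set Filter RealInnerProductSpace


lemma sqrtF_mul_sqrtPhi {g : ℝ → ℝ} {t : ℝ} (ht : 0 < t) (hgt : 0 ≤ g t) :
    Real.sqrt (g t / t) * Real.sqrt (t * g t) = g t := by
  rw [← Real.sqrt_mul (div_nonneg hgt ht.le)]
  rw [show g t / t * (t * g t) = (g t) ^ 2 by field_simp]
  exact Real.sqrt_sq hgt

section calc1
variable {ia sa : ℝ} {g g' : ℝ → ℝ}
variable (hia : 0 < ia) (hisa : ia ≤ sa) (hsa : sa < 1)
  (hg : ContinuousOn g (Set.Ici 0))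
  (hg' : ∀ t > (0:ℝ), HasDerivAt g (g' t) t)
  (hgpos : ∀ t > (0:ℝ), 0 < g t)
  (hrange : ∀ t > (0:ℝ), ia ≤ t * g' t / g t ∧ t * g' t / g t ≤ sa)

include hia hg' hgpos hrange in
lemma g_deriv_bounds {t : ℝ} (ht : 0 < t) :
    ia * g t ≤ t * g' t ∧ t * g' t ≤ sa * g t := by
  have h := hrange t ht
  have hg0 := hgpos t ht
  constructor
  · have := (le_div_iff₀ hg0).mp h.1; linarith
  · have := (div_le_iff₀ hg0).mp h.2; linarith

include hia hg hg' hgpos hrange in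
lemma g_mono : MonotoneOn g (Set.Ici (0:ℝ)) := by
  apply monotoneOn_of_deriv_nonneg (convex_Ici 0) hg
  · intro t ht
    rw [interior_Ici] at ht
    exact ((hg' t ht).differentiableAt).differentiableWithinAt
  · intro t ht
    rw [interior_Ici] at ht
    rw [(hg' t ht).deriv]
    have h1 := (g_deriv_bounds hia hg' hgpos hrange ht).1
    have h2 := hgpos t ht
    have ht' : (0:ℝ) < t := ht
    have h4 : 0 < t * g' t := lt_of_lt_of_le (mul_pos hia h2) h1
    rcases mul_pos_iff.mp h4 with ⟨_, h⟩ | ⟨h, _⟩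
    · exact h.le
    · linarith
include hia hisa hsa hg' hgpos hrange in
lemma gdivt_anti : AntitoneOn (fun t => g t / t) (Set.Ioi (0:ℝ)) := by
  apply antitoneOn_of_deriv_nonpos (convex_Ioi 0)
  · intro t ht
    exact (((hg' t ht).div (hasDerivAt_id' t) (ne_of_gt ht)).continuousAt).continuousWithinAt
  · intro t ht
    rw [interior_Ioi] at ht
    exact (((hg' t ht).div (hasDerivAt_id' t) (ne_of_gt ht)).differentiableAt).differentiableWithinAt
  · intro t ht
    rw [interior_Ioi] at ht
    rw [HasDerivAt.deriv (f := fun t => g t / t) ((hg' t ht).div (hasDerivAt_id' t) (ne_of_gt ht))]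
    have h2 := (g_deriv_bounds hia hg' hgpos hrange ht).2
    have h3 := hgpos t ht
    apply div_nonpos_of_nonpos_of_nonneg
    · nlinarith
    · positivity

include hia hisa hsa hg hg' hgpos hrange in
lemma F_anti {u v : ℝ} (hu : 0 < u) (huv : u ≤ v) :
    Real.sqrt (g v / v) ≤ Real.sqrt (g u / u) :=
  Real.sqrt_le_sqrt (gdivt_anti hia hisa hsa hg' hgpos hrange hu (lt_of_lt_of_le hu huv) huv)

include hia hisa hsa hg hg' hgpos hrange in
lemma slope_bounds {u v : ℝ} (hu : 0 < u) (huv : u ≤ v) :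
    (1+ia)/2 * Real.sqrt (g v / v) * (v-u) ≤ Real.sqrt (v * g v) - Real.sqrt (u * g u) ∧
    Real.sqrt (v * g v) - Real.sqrt (u * g u) ≤ (1+sa)/2 * Real.sqrt (g u / u) * (v-u) := by
  have hv : 0 < v := lt_of_lt_of_le hu huv
  -- derivative of phi on Ioo u v with bounds
  have hphi : ∀ t ∈ Set.Icc u v, ContinuousWithinAt (fun t => Real.sqrt (t * g t)) (Set.Icc u v) t := by
    intro t ht
    have ht0 : 0 < t := lt_of_lt_of_le hu ht.1
    have hd : HasDerivAt (fun t => t * g t) (1 * g t + t * g' t) t :=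
      (hasDerivAt_id' t).mul (hg' t ht0)
    exact ((hd.sqrt (mul_pos ht0 (hgpos t ht0)).ne').continuousAt).continuousWithinAt
  constructor
  · -- lower bound
    set K := (1+ia)/2 * Real.sqrt (g v / v) with hK
    have hmono : MonotoneOn (fun t => Real.sqrt (t * g t) - K * t) (Set.Icc u v) := by
      apply monotoneOn_of_deriv_nonneg (convex_Icc u v)
      · exact fun t ht => ((hphi t ht).sub ((continuous_const.mul continuous_id).continuousAt).continuousWithinAt)
      · intro t ht
        rw [interior_Icc] at ht
        have ht0 : 0 < t := lt_of_lt_of_le hu ht.1.le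
        have hd : HasDerivAt (fun t => t * g t) (1 * g t + t * g' t) t :=
          (hasDerivAt_id' t).mul (hg' t ht0)
        have hlin : HasDerivAt (fun y : ℝ => K * y) K t := by
          simpa using (hasDerivAt_id t).const_mul K
        exact (((hd.sqrt (mul_pos ht0 (hgpos t ht0)).ne').sub
          hlin).differentiableAt).differentiableWithinAt
      · intro t ht
        rw [interior_Icc] at ht
        have ht0 : 0 < t := lt_of_lt_of_le hu ht.1.le
        have hgt := hgpos t ht0
        have hd : HasDerivAt (fun t => t * g t) (1 * g t + t * g' t) t :=
          (hasDerivAt_id' t).mul (hg' t ht0)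
        have hlin : HasDerivAt (fun y : ℝ => K * y) K t := by
          simpa using (hasDerivAt_id t).const_mul K
        rw [HasDerivAt.deriv (f := fun t => Real.sqrt (t * g t) - K * t) ((hd.sqrt (mul_pos ht0 (hgpos t ht0)).ne').sub hlin)]
        rw [sub_nonneg]
        rw [le_div_iff₀ (by positivity : (0:ℝ) < 2 * Real.sqrt (t * g t))]
        have hFle : Real.sqrt (g v / v) ≤ Real.sqrt (g t / t) :=
          F_anti hia hisa hsa hg hg' hgpos hrange ht0 (le_of_lt ht.2)
        have hprod : Real.sqrt (g t / t) * Real.sqrt (t * g t) = g t :=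
          sqrtF_mul_sqrtPhi ht0 hgt.le
        have h1 := (g_deriv_bounds hia hg' hgpos hrange ht0).1
        have hs0 : (0:ℝ) ≤ Real.sqrt (t * g t) := Real.sqrt_nonneg _
        rw [hK]
        nlinarith [mul_le_mul_of_nonneg_right hFle hs0, Real.sqrt_nonneg (g v / v)]
    have := hmono (Set.left_mem_Icc.mpr huv) (Set.right_mem_Icc.mpr huv) huv
    simp only at this
    nlinarith
  · -- upper bound
    set K := (1+sa)/2 * Real.sqrt (g u / u) with hK
    have hmono : MonotoneOn (fun t => K * t - Real.sqrt (t * g t)) (Set.Icc u v) := by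
      apply monotoneOn_of_deriv_nonneg (convex_Icc u v)
      · exact fun t ht => (((continuous_const.mul continuous_id).continuousAt).continuousWithinAt.sub (hphi t ht))
      · intro t ht
        rw [interior_Icc] at ht
        have ht0 : 0 < t := lt_of_lt_of_le hu ht.1.le
        have hd : HasDerivAt (fun t => t * g t) (1 * g t + t * g' t) t :=
          (hasDerivAt_id' t).mul (hg' t ht0)
        have hlin : HasDerivAt (fun y : ℝ => K * y) K t := by
          simpa using (hasDerivAt_id t).const_mul K
        exact ((hlin.sub
          (hd.sqrt (mul_pos ht0 (hgpos t ht0)).ne')).differentiableAt).differentiableWithinAt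
      · intro t ht
        rw [interior_Icc] at ht
        have ht0 : 0 < t := lt_of_lt_of_le hu ht.1.le
        have hgt := hgpos t ht0
        have hd : HasDerivAt (fun t => t * g t) (1 * g t + t * g' t) t :=
          (hasDerivAt_id' t).mul (hg' t ht0)
        have hlin : HasDerivAt (fun y : ℝ => K * y) K t := by
          simpa using (hasDerivAt_id t).const_mul K
        rw [HasDerivAt.deriv (f := fun t => K * t - Real.sqrt (t * g t)) (hlin.sub (hd.sqrt (mul_pos ht0 (hgpos t ht0)).ne'))]
        rw [sub_nonneg]
        rw [div_le_iff₀ (by positivity : (0:ℝ) < 2 * Real.sqrt (t * g t))]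
        have hFle : Real.sqrt (g t / t) ≤ Real.sqrt (g u / u) :=
          F_anti hia hisa hsa hg hg' hgpos hrange hu (le_of_lt ht.1)
        have hprod : Real.sqrt (g t / t) * Real.sqrt (t * g t) = g t :=
          sqrtF_mul_sqrtPhi ht0 hgt.le
        have h2 := (g_deriv_bounds hia hg' hgpos hrange ht0).2
        have hs0 : (0:ℝ) ≤ Real.sqrt (t * g t) := Real.sqrt_nonneg _
        rw [hK]
        nlinarith [mul_le_mul_of_nonneg_left (mul_le_mul_of_nonneg_right hFle hs0)
          (by linarith : (0:ℝ) ≤ 1 + sa), Real.sqrt_nonneg (g u / u)]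
    have := hmono (Set.left_mem_Icc.mpr huv) (Set.right_mem_Icc.mpr huv) huv
    simp only at this
    nlinarith
end calc1

lemma sqrtPhi_eq' {g : ℝ → ℝ} {t : ℝ} (ht : 0 ≤ t) (hgt : 0 ≤ g t) :
    Real.sqrt (t * g t) = Real.sqrt (g t / t) * t := by
  rcases eq_or_lt_of_le ht with h | h
  · simp [← h]
  · have : t * g t = g t / t * t ^ 2 := by field_simp
    rw [this, Real.sqrt_mul (div_nonneg hgt h.le), Real.sqrt_sq h.le]

lemma sqrt_four_mul (x : ℝ) : Real.sqrt (4 * x) = 2 * Real.sqrt x := by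
  rw [show (4:ℝ) = 2 ^ 2 by norm_num, Real.sqrt_mul (by positivity),
    Real.sqrt_sq (by norm_num : (0:ℝ) ≤ 2)]

section calc2
variable {ia sa : ℝ} {g g' : ℝ → ℝ}
variable (hia : 0 < ia) (hisa : ia ≤ sa) (hsa : sa < 1)
  (hg : ContinuousOn g (Set.Ici 0))
  (hg' : ∀ t > (0:ℝ), HasDerivAt g (g' t) t)
  (hgpos : ∀ t > (0:ℝ), 0 < g t)
  (hrange : ∀ t > (0:ℝ), ia ≤ t * g' t / g t ∧ t * g' t / g t ≤ sa)

set_option maxHeartbeats 2000000 in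
include hia hisa hsa hg hg' hgpos hrange in
lemma key (a b p : ℝ) (hb : 0 ≤ b) (hba : b ≤ a) (ha : 0 < a) (hp : |p| ≤ a * b) :
    (1+ia)/2 * Real.sqrt (g (a+b)/(a+b)) * (a^2+b^2-2*p) ≤
      Real.sqrt (g a / a) * a^2 + Real.sqrt (g b / b) * b^2
        - (Real.sqrt (g a / a) + Real.sqrt (g b / b)) * p ∧
    Real.sqrt (g a / a) * a^2 + Real.sqrt (g b / b) * b^2
        - (Real.sqrt (g a / a) + Real.sqrt (g b / b)) * p ≤
      40 * Real.sqrt (g (a+b)/(a+b)) * (a^2+b^2-2*p) := by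
  have hs : 0 < a + b := by linarith
  have hFa0 : 0 ≤ Real.sqrt (g a / a) := Real.sqrt_nonneg _
  have hFb0 : 0 ≤ Real.sqrt (g b / b) := Real.sqrt_nonneg _
  have hFs0 : 0 ≤ Real.sqrt (g (a+b)/(a+b)) := Real.sqrt_nonneg _
  rcases eq_or_lt_of_le hb with hb0 | hb0
  · -- b = 0
    have hp0 : p = 0 := by
      have h1 := abs_le.mp hp
      have h2 := abs_nonneg p
      nlinarith [h1.1, h1.2]
    rw [← hb0, hp0]
    simp only [div_zero, Real.sqrt_zero, add_zero, mul_zero, zero_mul, sub_zero, add_zero]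
    constructor
    · nlinarith [mul_nonneg (mul_nonneg (by linarith : (0:ℝ) ≤ 1-(1+ia)/2) hFa0) (sq_nonneg a)]
    · nlinarith [mul_nonneg (mul_nonneg (by norm_num : (0:ℝ) ≤ 39) hFa0) (sq_nonneg a)]
  · -- b > 0
    set Fa := Real.sqrt (g a / a) with hFadef
    set Fb := Real.sqrt (g b / b) with hFbdef
    set Fs := Real.sqrt (g (a+b)/(a+b)) with hFsdef
    have hFsFa : Fs ≤ Fa := F_anti hia hisa hsa hg hg' hgpos hrange ha (by linarith)
    have hFaFb : Fa ≤ Fb := F_anti hia hisa hsa hg hg' hgpos hrange hb0 hba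
    have hsl := slope_bounds hia hisa hsa hg hg' hgpos hrange hb0 hba
    rw [sqrtPhi_eq' ha.le (hgpos a ha).le, sqrtPhi_eq' hb (hgpos b hb0).le] at hsl
    have e1 : (1+ia)/2 * Fa * (a-b) ≤ Fa*a - Fb*b := hsl.1
    have e2 : Fa*a - Fb*b ≤ (1+sa)/2 * Fb * (a-b) := hsl.2
    have hpab := abs_le.mp hp
    have hmono := g_mono hia hg hg' hgpos hrange
    have hga : g a ≤ g (a+b) := hmono (by exact ha.le) (by simp; linarith) (by linarith)
    have hgb : g b ≤ g (a+b) := hmono (by exact hb) (by simp; linarith) (by linarith)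
    have hgab : g b ≤ g a := hmono (by exact hb) (by exact ha.le) hba
    have hgs0 : 0 ≤ g (a+b) := (hgpos _ hs).le
    have hFa2 : Fa ≤ 2*Fs := by
      have h4 : g a / a ≤ 4 * g (a+b) / (a+b) := by
        rw [div_le_div_iff₀ ha hs]; nlinarith
      calc Fa ≤ Real.sqrt (4 * g (a+b) / (a+b)) := Real.sqrt_le_sqrt h4
      _ = 2*Fs := by rw [mul_div_assoc, sqrt_four_mul]
    have habp : 0 ≤ a*b - p := by linarith [hpab.2]
    have hab0 : 0 ≤ a - b := by linarith
    constructor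
    · -- lower bound
      have h1 := mul_le_mul_of_nonneg_right e1 hab0
      have h2 : 0 ≤ (1+ia)/2 * (Fa - Fs) * (a-b)^2 :=
        mul_nonneg (mul_nonneg (by linarith) (by linarith)) (sq_nonneg _)
      have h3 : 0 ≤ (Fa + Fb - 2*Fs) * (a*b - p) :=
        mul_nonneg (by linarith) habp
      have h4 : 0 ≤ (1 - (1+ia)/2) * Fs * (a*b - p) :=
        mul_nonneg (mul_nonneg (by linarith) hFs0) habp
      linarith [h1, h2, h3, h4]
    · -- upper bound
      rcases le_or_gt a (2*b) with hcase | hcase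
      · -- a ≤ 2b
        have hFb2 : Fb ≤ 2*Fs := by
          have h4 : g b / b ≤ 4 * g (a+b) / (a+b) := by
            rw [div_le_div_iff₀ hb0 hs]; nlinarith
          calc Fb ≤ Real.sqrt (4 * g (a+b) / (a+b)) := Real.sqrt_le_sqrt h4
          _ = 2*Fs := by rw [mul_div_assoc, sqrt_four_mul]
        have h1 := mul_le_mul_of_nonneg_right e2 hab0
        have h2 : 0 ≤ (1 - (1+sa)/2) * Fb * (a-b)^2 :=
          mul_nonneg (mul_nonneg (by linarith) hFb0) (sq_nonneg _)
        have h3 : 0 ≤ (2*Fs - Fb) * (a-b)^2 := mul_nonneg (by linarith) (sq_nonneg _)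
        have h4 : 0 ≤ (4*Fs - Fa - Fb) * (a*b - p) := mul_nonneg (by linarith) habp
        linarith [h1, h2, h3, h4, mul_nonneg hFs0 (sq_nonneg (a-b)), mul_nonneg hFs0 habp]
      · -- 2b < a
        have hphim : Fb * b ≤ Fa * a := by
          rw [← sqrtPhi_eq' ha.le (hgpos a ha).le, ← sqrtPhi_eq' hb (hgpos b hb0).le]
          apply Real.sqrt_le_sqrt
          nlinarith [(hgpos b hb0).le]
        have t1 : (Fa*a - Fb*b)*(a-b) ≤ 4*Fs*(a-b)^2 := by
          linarith [mul_nonneg (mul_nonneg hFb0 hb) hab0,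
            mul_nonneg (mul_nonneg (by linarith : (0:ℝ) ≤ 2*Fs - Fa) ha.le) hab0,
            mul_nonneg (mul_nonneg hFs0 (by linarith : (0:ℝ) ≤ a - 2*b)) hab0]
        have t2 : (Fa+Fb)*(a*b-p) ≤ 32*Fs*(a-b)^2 := by
          linarith [mul_nonneg (by linarith : (0:ℝ) ≤ Fb - Fa) habp,
            mul_nonneg hFb0 (by nlinarith [hpab.1] : (0:ℝ) ≤ a*b + p),
            mul_nonneg (by linarith [hphim] : (0:ℝ) ≤ Fa*a - Fb*b) (by linarith : (0:ℝ) ≤ 4*a),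
            mul_nonneg (by linarith : (0:ℝ) ≤ 2*Fs - Fa) (sq_nonneg a),
            mul_nonneg hFs0 (mul_nonneg (by linarith : (0:ℝ) ≤ a - 2*b) (by linarith : (0:ℝ) ≤ 3*a - 2*b))]
        linarith [t1, t2, mul_nonneg hFs0 (sq_nonneg (a-b)), mul_nonneg hFs0 habp]
end calc2

/-- There exist `0 < c ≤ C` depending only on `i_a, s_a` such that for all `n ≥ 1`,
all admissible `g` and all `ξ, η ∈ ℝⁿ` with `(ξ,η) ≠ (0,0)`:
`c √(g(|ξ|+|η|)/(|ξ|+|η|)) |ξ−η|² ≤ (V(ξ) − V(η))·(ξ − η) ≤ C √(g(|ξ|+|η|)/(|ξ|+|η|)) |ξ−η|²`. -/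
theorem stmt9 (ia sa : ℝ) (hia : 0 < ia) (hisa : ia ≤ sa) (hsa : sa < 1) :
    ∃ c C : ℝ, 0 < c ∧ c ≤ C ∧ ∀ (n : ℕ), 1 ≤ n → ∀ (g g' : ℝ → ℝ),
      ContinuousOn g (Set.Ici 0) →
      (∀ t > (0:ℝ), HasDerivAt g (g' t) t) →
      ContinuousOn g' (Set.Ici 0) →
      (∀ t ≥ (0:ℝ), 0 ≤ g t) →
      (∀ t > (0:ℝ), 0 < g t) →
      (∀ t > (0:ℝ), ia ≤ t * g' t / g t ∧ t * g' t / g t ≤ sa) →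
      ∀ ξ η : EuclideanSpace ℝ (Fin n), ¬(ξ = 0 ∧ η = 0) →
        c * Real.sqrt (g (‖ξ‖ + ‖η‖) / (‖ξ‖ + ‖η‖)) * ‖ξ - η‖ ^ 2 ≤
            ⟪(Real.sqrt (g ‖ξ‖ / ‖ξ‖) • ξ) - (Real.sqrt (g ‖η‖ / ‖η‖) • η), ξ - η⟫ ∧
          ⟪(Real.sqrt (g ‖ξ‖ / ‖ξ‖) • ξ) - (Real.sqrt (g ‖η‖ / ‖η‖) • η), ξ - η⟫ ≤
            C * Real.sqrt (g (‖ξ‖ + ‖η‖) / (‖ξ‖ + ‖η‖)) * ‖ξ - η‖ ^ 2 := by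
  refine ⟨(1+ia)/2, 40, by linarith, by linarith, ?_⟩
  intro n hn g g' hg hg' hg'c hgnn hgpos hrange ξ η hne
  have hI : ⟪(Real.sqrt (g ‖ξ‖ / ‖ξ‖) • ξ) - (Real.sqrt (g ‖η‖ / ‖η‖) • η), ξ - η⟫
      = Real.sqrt (g ‖ξ‖ / ‖ξ‖) * ‖ξ‖^2 + Real.sqrt (g ‖η‖ / ‖η‖) * ‖η‖^2
        - (Real.sqrt (g ‖ξ‖ / ‖ξ‖) + Real.sqrt (g ‖η‖ / ‖η‖)) * ⟪ξ, η⟫ := by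
    simp only [inner_sub_left, inner_sub_right, real_inner_smul_left,
      real_inner_self_eq_norm_sq, real_inner_comm η ξ]
    ring
  have hn2 : ‖ξ - η‖^2 = ‖ξ‖^2 + ‖η‖^2 - 2*⟪ξ, η⟫ := by
    rw [norm_sub_sq_real]; ring
  have hCS : |⟪ξ, η⟫| ≤ ‖ξ‖ * ‖η‖ := abs_real_inner_le_norm ξ η
  rw [hI, hn2]
  rcases le_total ‖η‖ ‖ξ‖ with hba | hba
  · have ha : 0 < ‖ξ‖ := by
      rcases eq_or_lt_of_le (norm_nonneg ξ) with h | h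
      · exact absurd ⟨norm_eq_zero.mp h.symm,
          norm_eq_zero.mp (le_antisymm (h ▸ hba) (norm_nonneg η))⟩ hne
      · exact h
    exact key hia hisa hsa hg hg' hgpos hrange ‖ξ‖ ‖η‖ ⟪ξ, η⟫ (norm_nonneg η) hba ha hCS
  · have hb : 0 < ‖η‖ := by
      rcases eq_or_lt_of_le (norm_nonneg η) with h | h
      · exact absurd ⟨norm_eq_zero.mp (le_antisymm (h ▸ hba) (norm_nonneg ξ)),
          norm_eq_zero.mp h.symm⟩ hne
      · exact h
    have hk := key hia hisa hsa hg hg' hgpos hrange ‖η‖ ‖ξ‖ ⟪ξ, η⟫ (norm_nonneg ξ) hba hb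
      (by rwa [mul_comm] at hCS)
    rw [add_comm ‖η‖ ‖ξ‖] at hk
    exact ⟨by linarith [hk.1], by linarith [hk.2]⟩
end

section
/- Let 0 < ρ < ρ₁, let x₀ ∈ ℝⁿ, let θ ∈ (0,1) and A ≥ 0, and let h : ℝⁿ → [0,∞) be measurable and integrable on the ball B_{ρ₁}(x₀). Assume that for all ρ ≤ t < s ≤ ρ₁ one has ∫_{B_t(x₀)} h dx ≤ θ·∫_{B_s(x₀)} h dx + |B_s(x₀)|·G(A/(s−t)), where |B_s(x₀)| denotes Lebesgue measure. Then there exists a constant C > 0, depending only on θ and s_a, such that ∫_{B_ρ(x₀)} h dx ≤ C·|B_{ρ₁}(x₀)|·G(A/(ρ₁−ρ)). -/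
open MeasureTheory Real Set Filter

-- g u / u is antitone on (0,∞)
lemma aux_antitone (g g' : ℝ → ℝ)
    (hderiv : ∀ t > (0:ℝ), HasDerivAt g (g' t) t)
    (hgpos : ∀ t > (0:ℝ), 0 < g t)
    (hbd : ∀ t > (0:ℝ), t * g' t / g t ≤ 1) :
    ∀ u v : ℝ, 0 < u → u ≤ v → g v / v ≤ g u / u := by
  have key : AntitoneOn (fun u => g u / u) (Set.Ioi 0) := by
    apply antitoneOn_of_hasDerivWithinAt_nonpos (convex_Ioi 0)
      (f' := fun u => (g' u * u - g u * 1) / u ^ 2)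
    · intro u hu
      exact ((hderiv u hu).div (hasDerivAt_id u) (ne_of_gt hu)).continuousAt.continuousWithinAt
    · intro u hu
      rw [interior_Ioi] at hu
      exact (((hderiv u hu).div (hasDerivAt_id u) (ne_of_gt hu))).hasDerivWithinAt
    · intro u hu
      rw [interior_Ioi] at hu
      apply div_nonpos_of_nonpos_of_nonneg _ (sq_nonneg u)
      have h1 : u * g' u ≤ g u := by
        have := hbd u hu
        rw [div_le_one (hgpos u hu)] at this
        linarith
      nlinarith
  intro u v hu huv
  exact key (Set.mem_Ioi.mpr hu) (Set.mem_Ioi.mpr (lt_of_lt_of_le hu huv)) huv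

lemma aux_G_growth (g g' : ℝ → ℝ)
    (hgc : ContinuousOn g (Set.Ici 0))
    (hderiv : ∀ t > (0:ℝ), HasDerivAt g (g' t) t)
    (hg0 : ∀ t ≥ (0:ℝ), 0 ≤ g t)
    (hgpos : ∀ t > (0:ℝ), 0 < g t)
    (hbd : ∀ t > (0:ℝ), t * g' t / g t ≤ 1) :
    ∀ x ≥ (0:ℝ), ∀ c ≥ (1:ℝ), (∫ τ in (0:ℝ)..(c*x), g τ) ≤ c^2 * ∫ τ in (0:ℝ)..x, g τ := by
  intro x hx c hc
  have hc0 : (0:ℝ) < c := lt_of_lt_of_le one_pos hc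
  have hint : ∀ y ≥ (0:ℝ), IntervalIntegrable g volume 0 y := by
    intro y hy
    apply ContinuousOn.intervalIntegrable
    apply hgc.mono
    rw [Set.uIcc_of_le hy]
    exact fun z hz => hz.1
  have hsub : (∫ τ in (0:ℝ)..(c*x), g τ) = c * ∫ u in (0:ℝ)..x, g (c*u) := by
    rw [intervalIntegral.integral_comp_mul_left g (ne_of_gt hc0), mul_zero, smul_eq_mul,
      ← mul_assoc, mul_inv_cancel₀ (ne_of_gt hc0), one_mul]
  rw [hsub]
  have hmono : (∫ u in (0:ℝ)..x, g (c*u)) ≤ ∫ u in (0:ℝ)..x, c * g u := by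
    apply intervalIntegral.integral_mono_on hx
    · apply ContinuousOn.intervalIntegrable
      apply (hgc.comp (continuous_const.mul continuous_id).continuousOn)
      intro u hu
      rw [Set.uIcc_of_le hx] at hu
      exact Set.mem_Ici.mpr (mul_nonneg hc0.le hu.1)
    · exact (hint x hx).const_mul c
    · intro u hu
      rcases eq_or_lt_of_le hu.1 with h|h
      · have : g 0 ≤ c * g 0 := le_mul_of_one_le_left (hg0 0 le_rfl) hc
        simpa [← h] using this
      · have h2 := aux_antitone g g' hderiv hgpos hbd u (c*u) h (le_mul_of_one_le_left h.le hc)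
        have hcu : 0 < c*u := by positivity
        rw [div_le_div_iff₀ hcu h] at h2
        nlinarith
  calc c * (∫ u in (0:ℝ)..x, g (c*u)) ≤ c * ∫ u in (0:ℝ)..x, c * g u := by
        exact mul_le_mul_of_nonneg_left hmono hc0.le
    _ = c^2 * ∫ τ in (0:ℝ)..x, g τ := by
        rw [intervalIntegral.integral_const_mul]; ring

set_option maxHeartbeats 1000000 in
/-- Orlicz iteration lemma. If for all `ρ ≤ t < s ≤ ρ₁`,
`∫_{B_t} h ≤ θ ∫_{B_s} h + |B_s| G(A/(s−t))`, then
`∫_{B_ρ} h ≤ C |B_{ρ₁}| G(A/(ρ₁−ρ))` with `C` depending only on `θ` and `s_a`. -/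
theorem stmt10 (θ sa : ℝ) (hθ : 0 < θ) (hθ1 : θ < 1) (hsa : sa < 1) :
    ∃ C > (0:ℝ), ∀ (n : ℕ), 1 ≤ n → ∀ (ia : ℝ), 0 < ia → ia ≤ sa →
      ∀ (g g' : ℝ → ℝ),
      ContinuousOn g (Set.Ici 0) →
      (∀ t > (0:ℝ), HasDerivAt g (g' t) t) →
      ContinuousOn g' (Set.Ici 0) →
      (∀ t ≥ (0:ℝ), 0 ≤ g t) →
      (∀ t > (0:ℝ), 0 < g t) →
      (∀ t > (0:ℝ), ia ≤ t * g' t / g t ∧ t * g' t / g t ≤ sa) →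
      ∀ (x₀ : EuclideanSpace ℝ (Fin n)) (ρ ρ₁ A : ℝ)
        (h : EuclideanSpace ℝ (Fin n) → ℝ),
        0 < ρ → ρ < ρ₁ → 0 ≤ A →
        Measurable h → (∀ x, 0 ≤ h x) →
        IntegrableOn h (Metric.ball x₀ ρ₁) →
        (∀ t s : ℝ, ρ ≤ t → t < s → s ≤ ρ₁ →
          (∫ x in Metric.ball x₀ t, h x) ≤
            θ * (∫ x in Metric.ball x₀ s, h x)
              + (volume (Metric.ball x₀ s)).toReal * (∫ τ in (0:ℝ)..(A / (s - t)), g τ)) →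
        (∫ x in Metric.ball x₀ ρ, h x) ≤
          C * (volume (Metric.ball x₀ ρ₁)).toReal * (∫ τ in (0:ℝ)..(A / (ρ₁ - ρ)), g τ) := by
  set l : ℝ := Real.sqrt ((1+θ)/2) with hl_def
  have hl0 : 0 < l := Real.sqrt_pos.mpr (by linarith)
  have hl2 : l^2 = (1+θ)/2 := Real.sq_sqrt (by linarith)
  have hl1 : l < 1 := by nlinarith [hl0]
  have hθl : θ < l^2 := by rw [hl2]; linarith
  have h1l : (0:ℝ) < 1 - l := by linarith
  refine ⟨((1-l)⁻¹)^2 * ((1+θ)/(1-θ)),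
    mul_pos (pow_pos (inv_pos.mpr h1l) 2) (div_pos (by linarith) (by linarith)), ?_⟩
  intro n hn ia hia hiasa g g' hgc hderiv hg'c hg0 hgpos hratio x₀ ρ ρ₁ A h hρ hρρ₁ hA
    hmeas hhpos hint hIter
  have hbd : ∀ t > (0:ℝ), t * g' t / g t ≤ 1 := fun t ht => (hratio t ht).2.trans hsa.le
  -- notation
  set B : ℝ := (volume (Metric.ball x₀ ρ₁)).toReal with hB_def
  set G₀ : ℝ := ∫ τ in (0:ℝ)..(A / (ρ₁ - ρ)), g τ with hG0_def
  have hB0 : 0 ≤ B := ENNReal.toReal_nonneg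
  have hG00 : 0 ≤ G₀ := by
    apply intervalIntegral.integral_nonneg (div_nonneg hA (by linarith))
    intro u hu; exact hg0 u hu.1
  set t : ℕ → ℝ := fun i => ρ₁ - l^i * (ρ₁ - ρ) with ht_def
  have ht0 : t 0 = ρ := by simp [ht_def]
  have htρ : ∀ i, ρ ≤ t i := by
    intro i
    have : l^i ≤ 1 := pow_le_one₀ hl0.le hl1.le
    have : l^i * (ρ₁ - ρ) ≤ 1 * (ρ₁ - ρ) := by nlinarith
    simp only [ht_def]; linarith
  have htρ₁ : ∀ i, t i ≤ ρ₁ := by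
    intro i
    have : 0 ≤ l^i * (ρ₁ - ρ) := mul_nonneg (pow_pos hl0 i).le (by linarith)
    simp only [ht_def]; linarith
  have htmono : ∀ i, t i < t (i+1) := by
    intro i
    have h1 : l^(i+1) < l^i := by
      rw [pow_succ]
      nlinarith [pow_pos hl0 i]
    simp only [ht_def]
    nlinarith
  have htdiff : ∀ i, t (i+1) - t i = (1-l) * l^i * (ρ₁ - ρ) := by
    intro i; simp only [ht_def, pow_succ]; ring
  -- the per-step constant
  set c : ℕ → ℝ := fun i => ((1-l) * l^i)⁻¹ with hc_def
  have hcpos : ∀ i : ℕ, (0:ℝ) < (1-l) * l^i := fun i => mul_pos h1l (pow_pos hl0 i)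
  have hc1 : ∀ i, 1 ≤ c i := by
    intro i
    simp only [hc_def]
    apply (one_le_inv₀ (hcpos i)).mpr
    calc (1-l) * l^i ≤ (1-l) * 1 := by
          have := pow_le_one₀ hl0.le hl1.le (n := i); nlinarith
      _ ≤ 1 := by linarith
  -- the ratio argument : A/(t(i+1) - t i) = c i * (A/(ρ₁-ρ))
  have hArat : ∀ i, A / (t (i+1) - t i) = c i * (A / (ρ₁ - ρ)) := by
    intro i
    rw [htdiff i]
    simp only [hc_def]
    have h1 : (1-l) ≠ 0 := ne_of_gt h1l
    have h2 : l^i ≠ 0 := ne_of_gt (pow_pos hl0 i)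
    have h3 : ρ₁ - ρ ≠ 0 := by intro hh; nlinarith
    field_simp
    try ring
  -- the step inequality
  have hI0 : ∀ s r : ℝ, s ≤ r → r ≤ ρ₁ →
      (∫ x in Metric.ball x₀ s, h x) ≤ ∫ x in Metric.ball x₀ r, h x := by
    intro s r hsr hrρ₁
    apply setIntegral_mono_set (hint.mono_set (Metric.ball_subset_ball hrρ₁) )
    · exact Filter.Eventually.of_forall (fun x => hhpos x)
    · exact HasSubset.Subset.eventuallyLE (Metric.ball_subset_ball hsr)
  have hInonneg : ∀ s : ℝ, 0 ≤ ∫ x in Metric.ball x₀ s, h x := by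
    intro s; exact setIntegral_nonneg measurableSet_ball (fun x _ => hhpos x)
  have hstep : ∀ i, (∫ x in Metric.ball x₀ (t i), h x) ≤
      θ * (∫ x in Metric.ball x₀ (t (i+1)), h x) + (c i)^2 * (B * G₀) := by
    intro i
    refine (hIter (t i) (t (i+1)) (htρ i) (htmono i) (htρ₁ (i+1))).trans ?_
    have hvol : (volume (Metric.ball x₀ (t (i+1)))).toReal ≤ B := by
      apply ENNReal.toReal_mono (MeasureTheory.measure_ball_lt_top).ne
      exact measure_mono (Metric.ball_subset_ball (htρ₁ (i+1)))
    have hG : (∫ τ in (0:ℝ)..(A / (t (i+1) - t i)), g τ) ≤ (c i)^2 * G₀ := by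
      rw [hArat i]
      refine aux_G_growth g g' hgc hderiv hg0 hgpos hbd (A/(ρ₁-ρ)) (div_nonneg hA (by linarith))
        (c i) (hc1 i)
    have hGnn : 0 ≤ ∫ τ in (0:ℝ)..(A / (t (i+1) - t i)), g τ := by
      apply intervalIntegral.integral_nonneg
      · rw [hArat i]
        exact mul_nonneg (le_trans zero_le_one (hc1 i)) (div_nonneg hA (by linarith))
      · intro u hu; exact hg0 u hu.1
    have : (volume (Metric.ball x₀ (t (i+1)))).toReal *
        (∫ τ in (0:ℝ)..(A / (t (i+1) - t i)), g τ) ≤ B * ((c i)^2 * G₀) := by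
      apply mul_le_mul hvol hG hGnn hB0
    linarith [this]
  -- induction
  have hiter : ∀ k : ℕ, (∫ x in Metric.ball x₀ ρ, h x) ≤
      θ^k * (∫ x in Metric.ball x₀ (t k), h x)
        + (∑ i ∈ Finset.range k, θ^i * (c i)^2) * (B * G₀) := by
    intro k
    induction k with
    | zero => simp [ht0]
    | succ k ih =>
      refine ih.trans ?_
      have h1 : θ^k * (∫ x in Metric.ball x₀ (t k), h x) ≤
          θ^k * (θ * (∫ x in Metric.ball x₀ (t (k+1)), h x) + (c k)^2 * (B * G₀)) :=
        mul_le_mul_of_nonneg_left (hstep k) (by positivity)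
      rw [Finset.sum_range_succ]
      have hx : 0 ≤ B * G₀ := mul_nonneg hB0 hG00
      calc θ^k * (∫ x in Metric.ball x₀ (t k), h x)
            + (∑ i ∈ Finset.range k, θ^i * (c i)^2) * (B * G₀)
          ≤ θ^k * (θ * (∫ x in Metric.ball x₀ (t (k+1)), h x) + (c k)^2 * (B * G₀))
            + (∑ i ∈ Finset.range k, θ^i * (c i)^2) * (B * G₀) := by linarith
        _ = θ^(k+1) * (∫ x in Metric.ball x₀ (t (k+1)), h x)
            + ((∑ i ∈ Finset.range k, θ^i * (c i)^2) + θ^k * (c k)^2) * (B * G₀) := by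
            ring
        _ ≤ _ := le_refl _
  -- bound the sum
  have hsum : ∀ k : ℕ, (∑ i ∈ Finset.range k, θ^i * (c i)^2) ≤
      ((1-l)⁻¹)^2 * ((1+θ)/(1-θ)) := by
    intro k
    have hrw : ∀ i, θ^i * (c i)^2 = ((1-l)⁻¹)^2 * (θ/l^2)^i := by
      intro i
      simp only [hc_def]
      have h1 : (1-l) ≠ 0 := ne_of_gt h1l
      have h2 : l ≠ 0 := ne_of_gt hl0
      field_simp
      rw [div_pow, ← pow_mul, ← pow_mul, mul_comm i 2]
      field_simp
    simp_rw [hrw]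
    rw [← Finset.mul_sum]
    have hr0 : 0 < θ/l^2 := by positivity
    have hr1 : θ/l^2 < 1 := by rw [div_lt_one (by positivity)]; exact hθl
    have hgeo : (∑ i ∈ Finset.range k, (θ/l^2)^i) ≤ (1 - θ/l^2)⁻¹ := by
      rw [← tsum_geometric_of_lt_one hr0.le hr1]
      exact Summable.sum_le_tsum (Finset.range k) (fun i _ => by positivity)
        (summable_geometric_of_lt_one hr0.le hr1)
    have heq : (1 - θ/l^2)⁻¹ ≤ (1+θ)/(1-θ) := by
      rw [hl2]
      have h1 : 1 - θ/((1+θ)/2) = (1-θ)/(1+θ) := by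
        field_simp; ring
      rw [h1, inv_div]
    calc ((1-l)⁻¹)^2 * (∑ i ∈ Finset.range k, (θ/l^2)^i)
        ≤ ((1-l)⁻¹)^2 * (1 - θ/l^2)⁻¹ :=
          mul_le_mul_of_nonneg_left hgeo (sq_nonneg _)
      _ ≤ ((1-l)⁻¹)^2 * ((1+θ)/(1-θ)) :=
          mul_le_mul_of_nonneg_left heq (sq_nonneg _)
  -- combine
  set M : ℝ := ∫ x in Metric.ball x₀ ρ₁, h x with hM_def
  have hfinal : ∀ k : ℕ, (∫ x in Metric.ball x₀ ρ, h x) ≤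
      θ^k * M + (((1-l)⁻¹)^2 * ((1+θ)/(1-θ))) * (B * G₀) := by
    intro k
    refine (hiter k).trans ?_
    have h1 : θ^k * (∫ x in Metric.ball x₀ (t k), h x) ≤ θ^k * M :=
      mul_le_mul_of_nonneg_left (hI0 (t k) ρ₁ (htρ₁ k) le_rfl) (by positivity)
    have h2 : (∑ i ∈ Finset.range k, θ^i * (c i)^2) * (B * G₀) ≤
        (((1-l)⁻¹)^2 * ((1+θ)/(1-θ))) * (B * G₀) :=
      mul_le_mul_of_nonneg_right (hsum k) (mul_nonneg hB0 hG00)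
    linarith
  have hlim : Filter.Tendsto (fun k : ℕ => θ^k * M + (((1-l)⁻¹)^2 * ((1+θ)/(1-θ))) * (B * G₀))
      Filter.atTop (nhds ((((1-l)⁻¹)^2 * ((1+θ)/(1-θ))) * (B * G₀))) := by
    have h0 : Filter.Tendsto (fun k : ℕ => θ^k * M) Filter.atTop (nhds 0) := by
      simpa using (tendsto_pow_atTop_nhds_zero_of_lt_one hθ.le hθ1).mul_const M
    have h2 := h0.add_const ((((1-l)⁻¹)^2 * ((1+θ)/(1-θ))) * (B * G₀))
    rw [zero_add] at h2
    exact h2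
  have := ge_of_tendsto' hlim hfinal
  calc (∫ x in Metric.ball x₀ ρ, h x) ≤ (((1-l)⁻¹)^2 * ((1+θ)/(1-θ))) * (B * G₀) := this
    _ = ((1-l)⁻¹)^2 * ((1+θ)/(1-θ)) * B * G₀ := by ring
end

section
/- Assume in addition that there is a constant c̄ > 0 with g(t) ≥ c̄·t^{i_a} for all t ≥ 0. Then there exists a constant C > 0, depending only on i_a, s_a and c̄, such that for all ξ, η ∈ ℝⁿ: |ξ − η| ≤ C·|V(ξ) − V(η)|^{2/(1+i_a)} + C·|V(ξ) − V(η)|·(|ξ| + 1)^{(1−i_a)/2}. -/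
open MeasureTheory Real Set Filter

lemma aux_bernoulli (p a b : ℝ) (hp0 : 0 < p) (hp1 : p ≤ 1) (hb : 0 ≤ b) (hba : b ≤ a) :
    p * (a - b) ≤ (a ^ p - b ^ p) * a ^ (1 - p) := by
  have ha : 0 ≤ a := hb.trans hba
  rcases ha.eq_or_lt with h | h
  · simp [← h]
    have : b = 0 := le_antisymm (h ▸ hba) hb
    simp [this]
  · have key : (b / a) ^ p ≤ (1 - p) + p * (b / a) := by
      have := Real.geom_mean_le_arith_mean2_weighted (by linarith : (0:ℝ) ≤ 1 - p)
        hp0.le (by norm_num : (0:ℝ) ≤ 1) (div_nonneg hb h.le) (by ring)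
      simpa using this
    have hbp : b ^ p ≤ ((1 - p) + p * (b / a)) * a ^ p := by
      have h2 : (b / a) ^ p = b ^ p / a ^ p := Real.div_rpow hb h.le p
      have h3 : 0 < a ^ p := Real.rpow_pos_of_pos h p
      calc b ^ p = (b/a)^p * a ^ p := by rw [h2]; field_simp
        _ ≤ ((1 - p) + p * (b / a)) * a ^ p := by
            exact mul_le_mul_of_nonneg_right key h3.le
    have hap1 : a ^ (p - 1) * a ^ (1 - p) = 1 := by
      rw [← Real.rpow_add h]; norm_num
    have hppow : a ^ p = a * a ^ (p-1) := by
      have := Real.rpow_add h 1 (p-1)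
      rw [Real.rpow_one] at this
      rw [← this]; ring_nf
    have key2 : p * (a - b) * a ^ (p - 1) ≤ a ^ p - b ^ p := by
      have : p * (a - b) * a ^ (p - 1) = a ^ p - ((1-p) + p * (b/a)) * a ^ p := by
        rw [hppow]; field_simp; ring
      linarith [hbp]
    calc p * (a - b) = p * (a - b) * (a ^ (p-1) * a ^ (1-p)) := by rw [hap1]; ring
      _ = (p * (a - b) * a ^ (p - 1)) * a ^ (1-p) := by ring
      _ ≤ (a ^ p - b ^ p) * a ^ (1 - p) := by
          exact mul_le_mul_of_nonneg_right key2 (Real.rpow_nonneg h.le _)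

lemma aux_ang {n : ℕ} (u v : EuclideanSpace ℝ (Fin n)) (hu : ‖u‖ = 1) (hv : ‖v‖ = 1)
    (x y : ℝ) (hy : 0 ≤ y) (hxy : y ≤ x) : y * ‖u - v‖ ≤ ‖x • u - y • v‖ := by
  have ht : (inner ℝ u v : ℝ) ≤ 1 := by simpa [hu, hv] using real_inner_le_norm u v
  have e1 : ‖x • u - y • v‖ ^ 2 = x^2 - 2*(x*y*(inner ℝ u v : ℝ)) + y^2 := by
    rw [norm_sub_sq_real, norm_smul, norm_smul, real_inner_smul_left, real_inner_smul_right, hu, hv]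
    simp [mul_pow, sq_abs]
    ring
  have e2 : ‖u - v‖ ^ 2 = 2 - 2*(inner ℝ u v : ℝ) := by
    rw [norm_sub_sq_real, hu, hv]; ring
  have hsq : (y * ‖u - v‖) ^ 2 ≤ ‖x • u - y • v‖ ^ 2 := by
    rw [mul_pow, e1, e2]
    nlinarith [sq_nonneg (x - y), mul_nonneg hy (sub_nonneg.2 hxy)]
  have h1 : 0 ≤ y * ‖u - v‖ := mul_nonneg hy (norm_nonneg _)
  exact (pow_le_pow_iff_left₀ h1 (norm_nonneg _) two_ne_zero).mp hsq

lemma aux_mono (ia cbar : ℝ) (hia : 0 < ia) (hcbar : 0 < cbar)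
    (g g' : ℝ → ℝ)
    (hgc : ContinuousOn g (Set.Ici 0))
    (hgd : ∀ t > (0:ℝ), HasDerivAt g (g' t) t)
    (hgpos : ∀ t > (0:ℝ), 0 < g t)
    (hquot : ∀ t > (0:ℝ), ia ≤ t * g' t / g t)
    (hlow : ∀ t ≥ (0:ℝ), cbar * t ^ ia ≤ g t) :
    ∀ a b : ℝ, 0 ≤ b → b ≤ a →
      Real.sqrt cbar * (a ^ ((1+ia)/2) - b ^ ((1+ia)/2))
        ≤ Real.sqrt (a * g a) - Real.sqrt (b * g b) := by
  set p : ℝ := (1+ia)/2 with hp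
  have hp0 : 0 < p := by positivity
  set F : ℝ → ℝ := fun t => Real.sqrt (t * g t) - Real.sqrt cbar * t ^ p with hF
  have hcont : ContinuousOn F (Set.Ici 0) := by
    apply ContinuousOn.sub
    · exact (continuousOn_id.mul hgc).sqrt
    · exact continuousOn_const.mul (continuousOn_id.rpow_const (fun x _ => Or.inr hp0.le))
  have hderiv : ∀ x : ℝ, 0 < x →
      HasDerivAt F ((1 * g x + x * g' x)/(2*Real.sqrt (x * g x)) - Real.sqrt cbar * (p * x ^ (p-1))) x := by
    intro x hx
    have hgx : 0 < g x := hgpos x hx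
    have hxg : 0 < x * g x := mul_pos hx hgx
    have hD : HasDerivAt (fun t => t * g t) (1 * g x + x * g' x) x :=
      (hasDerivAt_id x).mul (hgd x hx)
    exact (hD.sqrt hxg.ne').sub
      ((Real.hasDerivAt_rpow_const (Or.inl hx.ne')).const_mul (Real.sqrt cbar))
  have hmono : MonotoneOn F (Set.Ici 0) := by
    apply monotoneOn_of_deriv_nonneg (convex_Ici 0) hcont
    · intro x hx
      rw [interior_Ici] at hx
      exact ((hderiv x hx).differentiableAt).differentiableWithinAt
    · intro x hx
      rw [interior_Ici] at hx
      rw [(hderiv x hx).deriv]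
      have hgx : 0 < g x := hgpos x hx
      have hxg : 0 < x * g x := mul_pos hx hgx
      have hsx : 0 < Real.sqrt (x * g x) := Real.sqrt_pos.mpr hxg
      have step1 : Real.sqrt cbar * x ^ (p-1) ≤ Real.sqrt (g x / x) := by
        rw [show Real.sqrt cbar * x ^ (p-1) = Real.sqrt (cbar * (x ^ (p-1))^2) by
          rw [Real.sqrt_mul hcbar.le, Real.sqrt_sq (Real.rpow_nonneg hx.le _)]]
        apply Real.sqrt_le_sqrt
        have hsq : (x ^ (p-1))^2 = x ^ (ia - 1) := by
          rw [← Real.rpow_natCast (x ^ (p-1)) 2, ← Real.rpow_mul hx.le]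
          norm_num [hp]
          ring_nf
        rw [hsq, Real.rpow_sub hx, Real.rpow_one]
        rw [mul_div_assoc']
        gcongr
        exacts [hx.le, hlow x hx.le]
      have hsgx : 0 < Real.sqrt (g x) := Real.sqrt_pos.mpr hgx
      have hsxx : 0 < Real.sqrt x := Real.sqrt_pos.mpr hx
      have step2 : Real.sqrt (g x / x) = g x / Real.sqrt (x * g x) := by
        rw [Real.sqrt_div hgx.le, Real.sqrt_mul hx.le]
        rw [eq_div_iff (by positivity)]
        have : Real.sqrt (g x)/Real.sqrt x * (Real.sqrt x*Real.sqrt (g x))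
            = (Real.sqrt (g x)*Real.sqrt (g x)) * (Real.sqrt x/Real.sqrt x) := by ring
        rw [this, div_self hsxx.ne', mul_one, Real.mul_self_sqrt hgx.le]
      have hquot' : ia * g x ≤ x * g' x := by
        have := hquot x hx
        rw [le_div_iff₀ hgx] at this
        linarith
      have key : Real.sqrt cbar * (p * x ^ (p-1)) ≤ (1 * g x + x * g' x)/(2*Real.sqrt (x * g x)) := by
        calc Real.sqrt cbar * (p * x ^ (p-1)) = p * (Real.sqrt cbar * x ^ (p-1)) := by ring
          _ ≤ p * Real.sqrt (g x / x) := mul_le_mul_of_nonneg_left step1 hp0.le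
          _ = (2*p*g x)/(2*Real.sqrt (x*g x)) := by rw [step2]; ring
          _ ≤ (1 * g x + x * g' x)/(2*Real.sqrt (x * g x)) := by
              rw [div_le_div_iff_of_pos_right (mul_pos two_pos hsx), hp]
              linarith
      linarith [key]
  intro a b hb hba
  have := hmono (Set.mem_Ici.mpr hb) (Set.mem_Ici.mpr (hb.trans hba)) hba
  simp only [hF] at this
  linarith

lemma aux_vnorm {n : ℕ} (g : ℝ → ℝ) (hgnn : ∀ t ≥ (0:ℝ), 0 ≤ g t)
    (ζ : EuclideanSpace ℝ (Fin n)) :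
    ‖Real.sqrt (g ‖ζ‖ / ‖ζ‖) • ζ‖ = Real.sqrt (‖ζ‖ * g ‖ζ‖) := by
  rcases eq_or_ne ζ 0 with h | h
  · simp [h]
  · have hz : 0 < ‖ζ‖ := norm_pos_iff.mpr h
    rw [norm_smul, Real.norm_eq_abs, abs_of_nonneg (Real.sqrt_nonneg _)]
    rw [show ‖ζ‖ * g ‖ζ‖ = g ‖ζ‖ / ‖ζ‖ * (‖ζ‖ * ‖ζ‖) by field_simp]
    rw [Real.sqrt_mul (div_nonneg (hgnn _ hz.le) hz.le), Real.sqrt_mul_self hz.le]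

/-- Main estimate under the assumption `‖η‖ ≤ ‖ξ‖`. -/
lemma aux_main (ia cbar : ℝ) (hia : 0 < ia) (hia1 : ia < 1) (hcbar : 0 < cbar)
    {n : ℕ} (g g' : ℝ → ℝ)
    (hgc : ContinuousOn g (Set.Ici 0))
    (hgd : ∀ t > (0:ℝ), HasDerivAt g (g' t) t)
    (hgnn : ∀ t ≥ (0:ℝ), 0 ≤ g t)
    (hgpos : ∀ t > (0:ℝ), 0 < g t)
    (hquot : ∀ t > (0:ℝ), ia ≤ t * g' t / g t)
    (hlow : ∀ t ≥ (0:ℝ), cbar * t ^ ia ≤ g t)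
    (ξ η : EuclideanSpace ℝ (Fin n)) (hBA : ‖η‖ ≤ ‖ξ‖) :
    ‖ξ - η‖ ≤
      (1 - 2 ^ (-((1+ia)/2))) ^ (-(2/(1+ia)))
        * (‖(Real.sqrt (g ‖ξ‖ / ‖ξ‖) • ξ) - (Real.sqrt (g ‖η‖ / ‖η‖) • η)‖ / Real.sqrt cbar) ^ (2/(1+ia))
      + (4/(1+ia) + 1) / Real.sqrt cbar
        * ‖(Real.sqrt (g ‖ξ‖ / ‖ξ‖) • ξ) - (Real.sqrt (g ‖η‖ / ‖η‖) • η)‖ * ‖η‖ ^ ((1-ia)/2) := by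
  set p : ℝ := (1+ia)/2 with hp
  have hp0 : 0 < p := by positivity
  have hp1 : p ≤ 1 := by rw [hp]; linarith
  have h1p : 0 ≤ 1 - p := by linarith
  have hpe : 2/(1+ia) = 1/p := by rw [hp]; field_simp
  have hse : (1-ia)/2 = 1-p := by rw [hp]; ring
  have h2e : 4/(1+ia) = 2/p := by rw [hp]; field_simp; ring
  rw [hpe, hse, h2e]
  set q : ℝ := Real.sqrt cbar with hq
  have hq0 : 0 < q := Real.sqrt_pos.mpr hcbar
  set W : ℝ := ‖(Real.sqrt (g ‖ξ‖ / ‖ξ‖) • ξ) - (Real.sqrt (g ‖η‖ / ‖η‖) • η)‖ with hW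
  set A : ℝ := ‖ξ‖ with hA
  set B : ℝ := ‖η‖ with hB
  have hA0 : 0 ≤ A := norm_nonneg _
  have hB0 : 0 ≤ B := norm_nonneg _
  have hW0 : 0 ≤ W := norm_nonneg _
  have hmon := aux_mono ia cbar hia hcbar g g' hgc hgd hgpos hquot hlow
  have hWl : Real.sqrt (A * g A) - Real.sqrt (B * g B) ≤ W := by
    have := norm_sub_norm_le (Real.sqrt (g ‖ξ‖ / ‖ξ‖) • ξ) (Real.sqrt (g ‖η‖ / ‖η‖) • η)
    rwa [aux_vnorm g hgnn ξ, aux_vnorm g hgnn η] at this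
  have hf : q * (A ^ p - B ^ p) ≤ W := (hmon A B hB0 hBA).trans hWl
  have hfq : A ^ p - B ^ p ≤ W / q := by
    rw [le_div_iff₀ hq0]
    calc (A ^ p - B ^ p) * q = q * (A ^ p - B ^ p) := by ring
      _ ≤ W := hf
  have h2p : (0:ℝ) < 1 - 2 ^ (-p) := by
    have : (2:ℝ) ^ (-p) < 2 ^ (0:ℝ) := by
      apply Real.rpow_lt_rpow_of_exponent_lt one_lt_two
      linarith
    simp at this
    linarith
  -- radial estimate
  have radial : A - B ≤ (1 - 2 ^ (-p)) ^ (-(1/p)) * (W/q) ^ (1/p) + (2/p) * (W/q) * B ^ (1-p) := by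
    rcases le_or_gt B (A/2) with hc | hc
    · -- B small: use first term
      have h1 : B ^ p ≤ (A/2) ^ p := Real.rpow_le_rpow hB0 hc hp0.le
      have h2 : (A/2) ^ p = A ^ p * 2 ^ (-p) := by
        rw [show A/2 = A * 2⁻¹ by ring, Real.mul_rpow hA0 (by norm_num),
          Real.rpow_neg (by norm_num), Real.inv_rpow (by norm_num)]
      have h3 : (1 - 2 ^ (-p)) * A ^ p ≤ W / q := by
        have : (1 - 2 ^ (-p)) * A ^ p = A ^ p - A ^ p * 2 ^ (-p) := by ring
        rw [this, ← h2]
        linarith [hfq]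
      have hA' : A ≤ (1 - 2 ^ (-p)) ^ (-(1/p)) * (W/q) ^ (1/p) := by
        have h4 : (1 - 2 ^ (-p)) ^ (1/p) * A ≤ (W/q) ^ (1/p) := by
          have h4' : ((1 - 2 ^ (-p)) * A ^ p) ^ (1/p) ≤ (W/q) ^ (1/p) :=
            Real.rpow_le_rpow (mul_nonneg h2p.le (Real.rpow_nonneg hA0 _)) h3
              (one_div_nonneg.mpr hp0.le)
          rwa [Real.mul_rpow h2p.le (Real.rpow_nonneg hA0 _), ← Real.rpow_mul hA0,
            mul_one_div, div_self hp0.ne', Real.rpow_one] at h4'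
        rw [Real.rpow_neg h2p.le, inv_mul_eq_div, le_div_iff₀ (Real.rpow_pos_of_pos h2p _)]
        linarith [h4]
      have : 0 ≤ (2/p) * (W/q) * B ^ (1-p) :=
        mul_nonneg (mul_nonneg (div_nonneg two_pos.le hp0.le) (div_nonneg hW0 hq0.le))
          (Real.rpow_nonneg hB0 _)
      linarith
    · -- B large: Bernoulli
      rcases hA0.eq_or_lt with h0 | h0
      · have hBz : B = 0 := le_antisymm (hBA.trans h0.symm.le) hB0
        have hAz : A = 0 := h0.symm
        rw [hAz, hBz, sub_self]
        have t1 : 0 ≤ (1 - 2 ^ (-p)) ^ (-(1/p)) * (W/q) ^ (1/p) :=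
          mul_nonneg (Real.rpow_pos_of_pos h2p _).le (Real.rpow_nonneg (div_nonneg hW0 hq0.le) _)
        have t2 : 0 ≤ (2/p) * (W/q) * (0:ℝ) ^ (1-p) :=
          mul_nonneg (mul_nonneg (div_nonneg two_pos.le hp0.le) (div_nonneg hW0 hq0.le))
            (Real.rpow_nonneg le_rfl _)
        linarith
      · have bern := aux_bernoulli p A B hp0 hp1 hB0 hBA
        have hApB : A ^ (1-p) ≤ 2 * B ^ (1-p) := by
          have hA2B : A ≤ 2 * B := by linarith
          calc A ^ (1-p) ≤ (2*B) ^ (1-p) := Real.rpow_le_rpow hA0 hA2B h1p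
            _ = 2 ^ (1-p) * B ^ (1-p) := Real.mul_rpow (by norm_num) hB0
            _ ≤ 2 * B ^ (1-p) := by
                have : (2:ℝ) ^ (1-p) ≤ 2 ^ (1:ℝ) := by
                  apply Real.rpow_le_rpow_of_exponent_le one_le_two
                  linarith
                rw [Real.rpow_one] at this
                exact mul_le_mul_of_nonneg_right this (Real.rpow_nonneg hB0 _)
        have hABp : 0 ≤ A ^ p - B ^ p := sub_nonneg.mpr (Real.rpow_le_rpow hB0 hBA hp0.le)
        have key : p * (A - B) ≤ (W/q) * (2 * B ^ (1-p)) := by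
          calc p * (A - B) ≤ (A ^ p - B ^ p) * A ^ (1-p) := bern
            _ ≤ (W/q) * (2 * B ^ (1-p)) := by
                apply mul_le_mul hfq hApB (Real.rpow_nonneg hA0 _)
                exact div_nonneg hW0 hq0.le
        have h6 : A - B ≤ (2/p) * (W/q) * B ^ (1-p) := by
          rw [div_mul_eq_mul_div, div_mul_eq_mul_div, le_div_iff₀ hp0]
          linarith
        have : 0 ≤ (1 - 2 ^ (-p)) ^ (-(1/p)) * (W/q) ^ (1/p) :=
          mul_nonneg (Real.rpow_pos_of_pos h2p _).le (Real.rpow_nonneg (div_nonneg hW0 hq0.le) _)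
        linarith
  -- angular estimate
  have angular : ‖ξ - η‖ ≤ (A - B) + (1/q) * W * B ^ (1-p) := by
    rcases hB0.eq_or_lt with hBz | hBz
    · have hη : η = 0 := by
        rw [← norm_eq_zero, ← hB, ← hBz]
      have hnn : (0:ℝ) ≤ (1/q) * W * B ^ (1-p) :=
        mul_nonneg (mul_nonneg (one_div_nonneg.mpr hq0.le) hW0) (Real.rpow_nonneg hB0 _)
      rw [hη, sub_zero, ← hA]
      linarith
    · have hA0' : 0 < A := lt_of_lt_of_le hBz hBA
      have hξ : ξ ≠ 0 := by
        rw [← norm_pos_iff, ← hA]; exact hA0'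
      have hη : η ≠ 0 := by
        rw [← norm_pos_iff, ← hB]; exact hBz
      have hu : ‖(‖ξ‖⁻¹ • ξ : EuclideanSpace ℝ (Fin n))‖ = 1 := norm_smul_inv_norm hξ
      have hv : ‖(‖η‖⁻¹ • η : EuclideanSpace ℝ (Fin n))‖ = 1 := norm_smul_inv_norm hη
      have hdec : ξ - η = (A - B) • (‖ξ‖⁻¹ • ξ) + B • (‖ξ‖⁻¹ • ξ - ‖η‖⁻¹ • η) := by
        rw [hA, hB]
        match_scalars <;>
          field_simp <;> ring
      have hsplit : ‖ξ - η‖ ≤ (A - B) + B * ‖(‖ξ‖⁻¹ • ξ : EuclideanSpace ℝ (Fin n)) - ‖η‖⁻¹ • η‖ := by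
        rw [hdec]
        refine (norm_add_le _ _).trans ?_
        rw [norm_smul, hu, mul_one, norm_smul, Real.norm_eq_abs, Real.norm_eq_abs,
          abs_of_nonneg (sub_nonneg.2 hBA), abs_of_nonneg hB0]
      have hscal : ∀ ζ : EuclideanSpace ℝ (Fin n), ζ ≠ 0 →
          Real.sqrt (g ‖ζ‖ / ‖ζ‖) • ζ = Real.sqrt (‖ζ‖ * g ‖ζ‖) • (‖ζ‖⁻¹ • ζ) := by
        intro ζ hζ
        have hz : 0 < ‖ζ‖ := norm_pos_iff.mpr hζ
        rw [smul_smul]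
        congr 1
        rw [show ‖ζ‖ * g ‖ζ‖ = g ‖ζ‖ / ‖ζ‖ * (‖ζ‖ * ‖ζ‖) by field_simp,
          Real.sqrt_mul (div_nonneg (hgnn _ hz.le) hz.le), Real.sqrt_mul_self hz.le,
          mul_assoc, mul_inv_cancel₀ hz.ne', mul_one]
      have hABh : Real.sqrt (B * g B) ≤ Real.sqrt (A * g A) := by
        have h1 := hmon A B hB0 hBA
        have h2 : 0 ≤ A ^ ((1+ia)/2) - B ^ ((1+ia)/2) :=
          sub_nonneg.mpr (Real.rpow_le_rpow hB0 hBA (by positivity))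
        nlinarith [Real.sqrt_nonneg cbar, Real.sqrt_pos.mpr hcbar]
      have hWrw : W = ‖Real.sqrt (A * g A) • (‖ξ‖⁻¹ • ξ) - Real.sqrt (B * g B) • (‖η‖⁻¹ • η)‖ := by
        rw [hW, hscal ξ hξ, hscal η hη, ← hA, ← hB]
      have hWa : Real.sqrt (B * g B) * ‖(‖ξ‖⁻¹ • ξ : EuclideanSpace ℝ (Fin n)) - ‖η‖⁻¹ • η‖ ≤ W := by
        rw [hWrw]
        exact aux_ang _ _ hu hv _ _ (Real.sqrt_nonneg _) hABh
      have hhB : q * B ^ p ≤ Real.sqrt (B * g B) := by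
        have h1 := hmon B 0 le_rfl hB0
        rw [zero_mul, Real.sqrt_zero,
          Real.zero_rpow (ne_of_gt (by linarith : (0:ℝ) < (1+ia)/2))] at h1
        rw [hq, hp]
        linarith
      have hhB0 : 0 < Real.sqrt (B * g B) :=
        lt_of_lt_of_le (mul_pos hq0 (Real.rpow_pos_of_pos hBz _)) hhB
      have h7 : B * ‖(‖ξ‖⁻¹ • ξ : EuclideanSpace ℝ (Fin n)) - ‖η‖⁻¹ • η‖
          ≤ B / Real.sqrt (B * g B) * W := by
        rw [div_mul_eq_mul_div, le_div_iff₀ hhB0]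
        calc B * ‖(‖ξ‖⁻¹ • ξ : EuclideanSpace ℝ (Fin n)) - ‖η‖⁻¹ • η‖ * Real.sqrt (B * g B)
            = B * (Real.sqrt (B * g B) * ‖(‖ξ‖⁻¹ • ξ : EuclideanSpace ℝ (Fin n)) - ‖η‖⁻¹ • η‖) := by
              ring
          _ ≤ B * W := mul_le_mul_of_nonneg_left hWa hB0
      have h8 : B / Real.sqrt (B * g B) ≤ B ^ (1-p) / q := by
        have hBp : 0 < B ^ p := Real.rpow_pos_of_pos hBz _
        have s1 : B / Real.sqrt (B * g B) ≤ B / (q * B ^ p) :=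
          div_le_div_of_nonneg_left hB0 (mul_pos hq0 hBp) hhB
        have s2 : B / (q * B ^ p) = B ^ (1-p) / q := by
          rw [show B ^ (1-p) = B / B ^ p by
            rw [eq_div_iff hBp.ne', ← Real.rpow_add hBz]; norm_num]
          rw [div_div, mul_comm]
        rw [← s2]; exact s1
      have h9 : B / Real.sqrt (B * g B) * W ≤ B ^ (1-p) / q * W :=
        mul_le_mul_of_nonneg_right h8 hW0
      have : (1/q) * W * B ^ (1-p) = B ^ (1-p) / q * W := by ring
      linarith
  have final : (1/q) * W * B ^ (1-p) + (2/p) * (W/q) * B ^ (1-p) = (2/p + 1)/q * W * B ^ (1-p) := by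
    ring
  calc ‖ξ - η‖ ≤ (A - B) + (1/q) * W * B ^ (1-p) := angular
    _ ≤ ((1 - 2 ^ (-p)) ^ (-(1/p)) * (W/q) ^ (1/p) + (2/p) * (W/q) * B ^ (1-p))
        + (1/q) * W * B ^ (1-p) := by linarith [radial]
    _ = (1 - 2 ^ (-p)) ^ (-(1/p)) * (W/q) ^ (1/p) + (2/p + 1)/q * W * B ^ (1-p) := by
        rw [← final]; ring

/-- Assuming in addition `g(t) ≥ c̄ t^(i_a)` for all `t ≥ 0`, there is a constant
`C > 0` depending only on `i_a, s_a, c̄` such that for all `ξ, η ∈ ℝⁿ`: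
`|ξ − η| ≤ C |V(ξ) − V(η)|^(2/(1+i_a)) + C |V(ξ) − V(η)| (|ξ| + 1)^((1−i_a)/2)`. -/
theorem stmt11 (ia sa cbar : ℝ) (hia : 0 < ia) (hisa : ia ≤ sa) (hsa : sa < 1)
    (hcbar : 0 < cbar) :
    ∃ C > (0:ℝ), ∀ (n : ℕ), 1 ≤ n → ∀ (g g' : ℝ → ℝ),
      ContinuousOn g (Set.Ici 0) →
      (∀ t > (0:ℝ), HasDerivAt g (g' t) t) →
      ContinuousOn g' (Set.Ici 0) →
      (∀ t ≥ (0:ℝ), 0 ≤ g t) →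
      (∀ t > (0:ℝ), 0 < g t) →
      (∀ t > (0:ℝ), ia ≤ t * g' t / g t ∧ t * g' t / g t ≤ sa) →
      (∀ t ≥ (0:ℝ), cbar * t ^ ia ≤ g t) →
      ∀ ξ η : EuclideanSpace ℝ (Fin n),
        ‖ξ - η‖ ≤
          C * ‖(Real.sqrt (g ‖ξ‖ / ‖ξ‖) • ξ) - (Real.sqrt (g ‖η‖ / ‖η‖) • η)‖ ^ (2 / (1 + ia))
            + C * ‖(Real.sqrt (g ‖ξ‖ / ‖ξ‖) • ξ) - (Real.sqrt (g ‖η‖ / ‖η‖) • η)‖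
                * (‖ξ‖ + 1) ^ ((1 - ia) / 2) := by
  have hia1 : ia < 1 := lt_of_le_of_lt hisa hsa
  have h1ia : (0:ℝ) < 1 + ia := by linarith
  have hq0 : 0 < Real.sqrt cbar := Real.sqrt_pos.mpr hcbar
  have h2p : (0:ℝ) < 1 - 2 ^ (-((1+ia)/2)) := by
    have h := Real.rpow_lt_rpow_of_exponent_lt (one_lt_two : (1:ℝ) < 2)
      (show -((1+ia)/2) < 0 by linarith)
    rw [Real.rpow_zero] at h
    linarith
  set C1 : ℝ := (1 - 2 ^ (-((1+ia)/2))) ^ (-(2/(1+ia))) with hC1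
  have hC1p : 0 < C1 := Real.rpow_pos_of_pos h2p _
  set C2 : ℝ := (4/(1+ia) + 1) / Real.sqrt cbar with hC2
  have hC2p : 0 < C2 := by
    apply div_pos _ hq0
    have : (0:ℝ) < 4/(1+ia) := div_pos four_pos h1ia
    linarith
  set r : ℝ := 2/(1+ia) with hr
  set s : ℝ := (1-ia)/2 with hs
  have hr0 : 0 ≤ r := by rw [hr]; positivity
  have hs0 : 0 ≤ s := by rw [hs]; linarith
  set C : ℝ := C1 / Real.sqrt cbar ^ r + C2 with hC
  have hCq : 0 < Real.sqrt cbar ^ r := Real.rpow_pos_of_pos hq0 _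
  have hCp : 0 < C := add_pos (div_pos hC1p hCq) hC2p
  refine ⟨C, hCp, ?_⟩
  intro n hn g g' hgc hgd hg'c hgnn hgpos hquot hlow ξ η
  have key : ∀ ζ χ : EuclideanSpace ℝ (Fin n), ‖χ‖ ≤ ‖ζ‖ → ‖χ‖ ≤ ‖ξ‖ →
      ‖ζ - χ‖ ≤
        C * ‖(Real.sqrt (g ‖ζ‖ / ‖ζ‖) • ζ) - (Real.sqrt (g ‖χ‖ / ‖χ‖) • χ)‖ ^ r
          + C * ‖(Real.sqrt (g ‖ζ‖ / ‖ζ‖) • ζ) - (Real.sqrt (g ‖χ‖ / ‖χ‖) • χ)‖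
              * (‖ξ‖ + 1) ^ s := by
    intro ζ χ hc hcξ
    have H := aux_main ia cbar hia hia1 hcbar g g' hgc hgd hgnn hgpos
      (fun t ht => (hquot t ht).1) hlow ζ χ hc
    rw [← hr, ← hs, ← hC1, ← hC2] at H
    set W : ℝ := ‖(Real.sqrt (g ‖ζ‖ / ‖ζ‖) • ζ) - (Real.sqrt (g ‖χ‖ / ‖χ‖) • χ)‖ with hWd
    have hW0 : 0 ≤ W := norm_nonneg _
    have t1 : C1 * (W / Real.sqrt cbar) ^ r = C1 / Real.sqrt cbar ^ r * W ^ r := by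
      rw [Real.div_rpow hW0 hq0.le]; ring
    have b1 : C1 / Real.sqrt cbar ^ r * W ^ r ≤ C * W ^ r := by
      apply mul_le_mul_of_nonneg_right _ (Real.rpow_nonneg hW0 _)
      rw [hC]; linarith
    have e1 : ‖χ‖ ^ s ≤ (‖ξ‖ + 1) ^ s :=
      Real.rpow_le_rpow (norm_nonneg _) (by linarith) hs0
    have b2 : C2 * W * ‖χ‖ ^ s ≤ C * W * (‖ξ‖ + 1) ^ s := by
      have u1 : C2 * W * ‖χ‖ ^ s ≤ C2 * W * (‖ξ‖ + 1) ^ s :=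
        mul_le_mul_of_nonneg_left e1 (mul_nonneg hC2p.le hW0)
      have u2 : C2 * W * (‖ξ‖ + 1) ^ s ≤ C * W * (‖ξ‖ + 1) ^ s := by
        apply mul_le_mul_of_nonneg_right _ (Real.rpow_nonneg (by positivity) _)
        apply mul_le_mul_of_nonneg_right _ hW0
        rw [hC]; linarith [div_pos hC1p hCq]
      linarith
    calc ‖ζ - χ‖ ≤ C1 * (W / Real.sqrt cbar) ^ r + C2 * W * ‖χ‖ ^ s := H
      _ = C1 / Real.sqrt cbar ^ r * W ^ r + C2 * W * ‖χ‖ ^ s := by rw [t1]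
      _ ≤ C * W ^ r + C * W * (‖ξ‖ + 1) ^ s := add_le_add b1 b2
  rcases le_total ‖η‖ ‖ξ‖ with hc | hc
  · exact key ξ η hc hc
  · have H := key η ξ hc le_rfl
    rwa [norm_sub_rev η ξ,
      norm_sub_rev (Real.sqrt (g ‖η‖ / ‖η‖) • η) (Real.sqrt (g ‖ξ‖ / ‖ξ‖) • ξ)] at H
end

section
/- Let B ⊆ ℝⁿ be measurable, let q > 0 and c₀ > 0, let f : ℝⁿ → ℝ and H : ℝⁿ → [0,∞) be measurable, and assume ∫_{B ∩ {|f| ≤ k}} H dx ≤ c₀·k for every k > 0. Then there exists a constant C, depending only on q and c₀, such that sup_{l>0} l·|{x ∈ B : H(x) > l}|^{(1+q)/q} ≤ C·sup_{k>0} k·|{x ∈ B : |f(x)| > k}|^{1/q}, i.e. ‖H‖_{L^{q/(1+q),∞}(B)} ≤ C·‖f‖_{L^{q,∞}(B)}. -/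
open MeasureTheory Real Set Filter
open scoped ENNReal

/-- If `∫_{B ∩ {|f| ≤ k}} H ≤ c₀ k` for all `k > 0`, then
`‖H‖_{L^{q/(1+q),∞}(B)} ≤ C ‖f‖_{L^{q,∞}(B)}` with `C` depending only on `q` and `c₀`,
where `‖h‖_{L^{r,∞}(B)} = sup_{l>0} l |{x ∈ B : |h(x)| > l}|^{1/r}` (extended reals). -/
theorem stmt12 (q c₀ : ℝ) (hq : 0 < q) (hc₀ : 0 < c₀) :
    ∃ C : ℝ, 0 < C ∧ ∀ (n : ℕ) (B : Set (EuclideanSpace ℝ (Fin n)))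
      (f H : EuclideanSpace ℝ (Fin n) → ℝ),
      MeasurableSet B → Measurable f → Measurable H → (∀ x, 0 ≤ H x) →
      (∀ k : ℝ, 0 < k →
        (∫⁻ x in B ∩ {x | |f x| ≤ k}, ENNReal.ofReal (H x)) ≤ ENNReal.ofReal (c₀ * k)) →
      (⨆ (l : ℝ) (_ : 0 < l),
          ENNReal.ofReal l * (volume {x | x ∈ B ∧ H x > l}) ^ ((1 + q) / q)) ≤
        ENNReal.ofReal C *
          ⨆ (k : ℝ) (_ : 0 < k),
            ENNReal.ofReal k * (volume {x | x ∈ B ∧ |f x| > k}) ^ (1 / q) := by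
  have hq1 : (0:ℝ) < 1 + q := by linarith
  set e : ℝ := (1 + q) / q with he
  have hepos : 0 < e := by positivity
  refine ⟨2 ^ e * c₀, by positivity, ?_⟩
  intro n B f H hB hf hH hH0 hint
  set S := ⨆ (k : ℝ) (_ : 0 < k),
      ENNReal.ofReal k * (volume {x | x ∈ B ∧ |f x| > k}) ^ (1 / q) with hS
  refine iSup₂_le fun l hl => ?_
  -- splitting + Chebyshev bound
  have hsplit : ∀ k : ℝ, 0 < k →
      volume {x | x ∈ B ∧ H x > l}
        ≤ volume {x | x ∈ B ∧ |f x| > k} + ENNReal.ofReal (c₀ * k / l) := by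
    intro k hk
    have hsub : {x | x ∈ B ∧ H x > l} ⊆
        {x | x ∈ B ∧ |f x| > k} ∪ ((B ∩ {x | |f x| ≤ k}) ∩ {x | H x > l}) := by
      intro x hx
      rcases le_or_gt (|f x|) k with h | h
      · exact Or.inr ⟨⟨hx.1, h⟩, hx.2⟩
      · exact Or.inl ⟨hx.1, h⟩
    refine (measure_mono hsub).trans ((measure_union_le _ _).trans ?_)
    refine add_le_add_right ?_ _
    have hmeas : MeasurableSet {x : EuclideanSpace ℝ (Fin n) | H x > l} :=
      measurableSet_lt measurable_const hH
    have hre : volume ((B ∩ {x | |f x| ≤ k}) ∩ {x | H x > l})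
        = (volume.restrict (B ∩ {x | |f x| ≤ k})) {x | H x > l} := by
      rw [Measure.restrict_apply hmeas, Set.inter_comm]
    have hcheb : ENNReal.ofReal l * (volume.restrict (B ∩ {x | |f x| ≤ k})) {x | H x > l}
        ≤ ∫⁻ x in B ∩ {x | |f x| ≤ k}, ENNReal.ofReal (H x) := by
      refine le_trans ?_ (mul_meas_ge_le_lintegral₀
        (μ := volume.restrict (B ∩ {x | |f x| ≤ k}))
        (hH.ennreal_ofReal.aemeasurable) (ENNReal.ofReal l))
      refine mul_le_mul_right (measure_mono fun x hx => ?_) _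
      exact ENNReal.ofReal_le_ofReal (le_of_lt hx)
    have hfin := hcheb.trans (hint k hk)
    rw [hre, ENNReal.ofReal_div_of_pos hl,
      ENNReal.le_div_iff_mul_le (Or.inl (by simp [hl])) (Or.inl ENNReal.ofReal_ne_top),
      mul_comm]
    exact hfin
  -- weak bound on f
  have hfS : ∀ k : ℝ, 0 < k →
      volume {x | x ∈ B ∧ |f x| > k} ≤ (S / ENNReal.ofReal k) ^ q := by
    intro k hk
    have h1 : ENNReal.ofReal k * (volume {x | x ∈ B ∧ |f x| > k}) ^ (1 / q) ≤ S :=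
      le_iSup₂ (f := fun k (_ : 0 < k) =>
        ENNReal.ofReal k * (volume {x | x ∈ B ∧ |f x| > k}) ^ (1 / q)) k hk
    have h2 : (volume {x | x ∈ B ∧ |f x| > k}) ^ (1 / q) ≤ S / ENNReal.ofReal k := by
      rw [ENNReal.le_div_iff_mul_le (Or.inl (by simp [hk])) (Or.inl ENNReal.ofReal_ne_top),
        mul_comm]
      exact h1
    calc volume {x | x ∈ B ∧ |f x| > k}
        = ((volume {x | x ∈ B ∧ |f x| > k}) ^ (1 / q)) ^ q := by
          rw [← ENNReal.rpow_mul, one_div, inv_mul_cancel₀ hq.ne', ENNReal.rpow_one]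
      _ ≤ (S / ENNReal.ofReal k) ^ q := ENNReal.rpow_le_rpow h2 hq.le
  rcases eq_top_or_lt_top S with hStop | hStop
  · rw [hStop, ENNReal.mul_top (by simp [hc₀, hepos]; positivity)]
    exact le_top
  rcases eq_or_ne S 0 with hS0 | hS0
  · -- degenerate case: f weak norm is zero
    have hf0 : ∀ k : ℝ, 0 < k → volume {x | x ∈ B ∧ |f x| > k} = 0 := by
      intro k hk
      have := hfS k hk
      rw [hS0, ENNReal.zero_div, ENNReal.zero_rpow_of_pos hq] at this
      exact le_antisymm this zero_le
    have hv0 : volume {x | x ∈ B ∧ H x > l} = 0 := by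
      refine le_antisymm (ENNReal.le_of_forall_pos_le_add fun ε hε _ => ?_) zero_le
      rw [zero_add]
      have hεR : (0:ℝ) < (ε:ℝ) := hε
      have hk : (0:ℝ) < l * ε / c₀ := by positivity
      refine (hsplit _ hk).trans ?_
      rw [hf0 _ hk, zero_add]
      have hee : c₀ * (l * ε / c₀) / l = (ε:ℝ) := by field_simp
      rw [hee, ENNReal.ofReal_coe_nnreal]
    rw [hv0, ENNReal.zero_rpow_of_pos hepos, mul_zero]
    exact zero_le
  -- main case
  set a : ℝ := S.toReal with ha
  have hapos : 0 < a := ENNReal.toReal_pos hS0 hStop.ne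
  have hSa : S = ENNReal.ofReal a := (ENNReal.ofReal_toReal hStop.ne).symm
  set m : ℝ := (a * c₀ / l) ^ (q / (1 + q)) with hm
  have hmpos : 0 < m := Real.rpow_pos_of_pos (by positivity) _
  set k : ℝ := a / m ^ (1 / q) with hk
  have hmq : 0 < m ^ (1 / q) := Real.rpow_pos_of_pos hmpos _
  have hkpos : 0 < k := by positivity
  -- F2 : m ^ e = a * c₀ / l
  have hm2 : m ^ e = a * c₀ / l := by
    rw [hm, ← Real.rpow_mul (by positivity : (0:ℝ) ≤ a * c₀ / l)]
    have hex : q / (1 + q) * e = 1 := by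
      rw [he]; field_simp
    rw [hex, Real.rpow_one]
  -- Claim1 : (a / k) ^ q = m
  have hc1 : (a / k) ^ q = m := by
    have hak : a / k = m ^ (1 / q) := by
      rw [hk]
      field_simp
    rw [hak, ← Real.rpow_mul hmpos.le, one_div, inv_mul_cancel₀ hq.ne', Real.rpow_one]
  -- Claim2 : c₀ * k / l = m
  have hc2 : c₀ * k / l = m := by
    have hmm : m * m ^ (1 / q) = a * c₀ / l := by
      have h1 : m * m ^ (1 / q) = m ^ (1 + 1 / q) := by
        rw [Real.rpow_add hmpos, Real.rpow_one]
      have h2 : (1 : ℝ) + 1 / q = e := by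
        rw [he]; field_simp; ring
      rw [h1, h2, hm2]
    rw [hk]
    field_simp
    field_simp at hmm
    nlinarith [hmq, hmpos, hl, hapos, hc₀]
  -- two-term bound
  have hbound : volume {x | x ∈ B ∧ H x > l} ≤ ENNReal.ofReal (2 * m) := by
    refine (hsplit k hkpos).trans ?_
    have h1 : (S / ENNReal.ofReal k) ^ q = ENNReal.ofReal m := by
      rw [hSa, ← ENNReal.ofReal_div_of_pos hkpos,
        ENNReal.ofReal_rpow_of_pos (by positivity), hc1]
    calc volume {x | x ∈ B ∧ |f x| > k} + ENNReal.ofReal (c₀ * k / l)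
        ≤ (S / ENNReal.ofReal k) ^ q + ENNReal.ofReal (c₀ * k / l) := by
          exact add_le_add_left (hfS k hkpos) _
      _ = ENNReal.ofReal m + ENNReal.ofReal m := by rw [h1, hc2]
      _ = ENNReal.ofReal (2 * m) := by
          rw [← ENNReal.ofReal_add hmpos.le hmpos.le, two_mul]
  -- final computation
  have hF5 : l * (2 * m) ^ e = 2 ^ e * c₀ * a := by
    rw [Real.mul_rpow (by norm_num) hmpos.le, hm2]
    field_simp
  calc ENNReal.ofReal l * (volume {x | x ∈ B ∧ H x > l}) ^ e
      ≤ ENNReal.ofReal l * (ENNReal.ofReal (2 * m)) ^ e := by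
        exact mul_le_mul_right (ENNReal.rpow_le_rpow hbound hepos.le) _
    _ = ENNReal.ofReal l * ENNReal.ofReal ((2 * m) ^ e) := by
        rw [ENNReal.ofReal_rpow_of_pos (by positivity)]
    _ = ENNReal.ofReal (l * (2 * m) ^ e) := (ENNReal.ofReal_mul hl.le).symm
    _ = ENNReal.ofReal (2 ^ e * c₀ * a) := by rw [hF5]
    _ = ENNReal.ofReal (2 ^ e * c₀) * ENNReal.ofReal a := ENNReal.ofReal_mul (by positivity)
    _ = ENNReal.ofReal (2 ^ e * c₀) * S := by rw [hSa]
end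

section
/- Let γ₀ ∈ (0,1), let f : ℝⁿ → ℝⁿ be locally integrable, and let x be a Lebesgue point of f, i.e. the average ⨍_{B_ρ(x)} |f(y) − f(x)| dy → 0 as ρ → 0. Suppose that for each sufficiently small ρ > 0 a vector q_ρ ∈ ℝⁿ satisfies ∫_{B_ρ(x)} |f − q_ρ|^{γ₀} dy = inf_{q ∈ ℝⁿ} ∫_{B_ρ(x)} |f − q|^{γ₀} dy. Then q_ρ → f(x) as ρ → 0. -/
open MeasureTheory Real Set Filter Topology

private lemma real_rpow_add_le_add_rpow {p a b : ℝ} (ha : 0 ≤ a) (hb : 0 ≤ b)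
    (h0 : 0 ≤ p) (h1 : p ≤ 1) : (a + b) ^ p ≤ a ^ p + b ^ p := by
  have h := NNReal.coe_le_coe.2 (NNReal.rpow_add_le_add_rpow a.toNNReal b.toNNReal h0 h1)
  push_cast [NNReal.coe_rpow, Real.coe_toNNReal a ha, Real.coe_toNNReal b hb] at h
  exact h

private lemma rpow_le_eps {γ ε t : ℝ} (hγ0 : 0 < γ) (hγ1 : γ < 1) (hε : 0 < ε) (ht : 0 ≤ t) :
    t ^ γ ≤ ε ^ γ + ε ^ (γ - 1) * t := by
  rcases le_or_gt t ε with h | h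
  · have h1 : t ^ γ ≤ ε ^ γ := Real.rpow_le_rpow ht h hγ0.le
    have h2 : 0 ≤ ε ^ (γ - 1) * t := mul_nonneg (Real.rpow_nonneg hε.le _) ht
    linarith
  · have ht0 : 0 < t := hε.trans h
    have e1 : t ^ γ = t ^ (γ - 1) * t := by
      rw [← Real.rpow_add_one ht0.ne' (γ - 1), sub_add_cancel]
    have hb : t ^ (γ - 1) ≤ ε ^ (γ - 1) :=
      Real.rpow_le_rpow_of_nonpos hε h.le (by linarith)
    have h2 : t ^ (γ - 1) * t ≤ ε ^ (γ - 1) * t := mul_le_mul_of_nonneg_right hb ht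
    have h3 : 0 ≤ ε ^ γ := Real.rpow_nonneg hε.le _
    linarith [e1 ▸ h2]

/-- If `x` is a Lebesgue point of `f` and, for each sufficiently small `ρ > 0`,
`q ρ` minimizes `q' ↦ ∫_{B_ρ(x)} |f − q'|^{γ₀}`, then `q ρ → f(x)` as `ρ → 0⁺`. -/
theorem stmt13 (n : ℕ) (γ₀ : ℝ) (hγ₀ : 0 < γ₀) (hγ₁ : γ₀ < 1)
    (f : EuclideanSpace ℝ (Fin n) → EuclideanSpace ℝ (Fin n))
    (hf : LocallyIntegrable f volume)
    (x : EuclideanSpace ℝ (Fin n))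
    (hx : Tendsto (fun ρ : ℝ => ⨍ y in Metric.ball x ρ, ‖f y - f x‖)
      (𝓝[>] 0) (𝓝 0))
    (q : ℝ → EuclideanSpace ℝ (Fin n)) (ρ₀ : ℝ) (hρ₀ : 0 < ρ₀)
    (hq : ∀ ρ : ℝ, 0 < ρ → ρ < ρ₀ → ∀ q' : EuclideanSpace ℝ (Fin n),
      (∫ y in Metric.ball x ρ, ‖f y - q ρ‖ ^ γ₀) ≤ ∫ y in Metric.ball x ρ, ‖f y - q'‖ ^ γ₀) :
    Tendsto q (𝓝[>] 0) (𝓝 (f x)) := by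
  -- main estimate
  have key : ∀ ρ : ℝ, 0 < ρ → ρ < ρ₀ → ∀ ε : ℝ, 0 < ε →
      ‖q ρ - f x‖ ^ γ₀ ≤ 2 * ε ^ γ₀ +
        2 * ε ^ (γ₀ - 1) * ⨍ y in Metric.ball x ρ, ‖f y - f x‖ := by
    intro ρ hρ hρρ₀ ε hε
    set B := Metric.ball x ρ with hB
    have hmeas : MeasurableSet B := Metric.isOpen_ball.measurableSet
    have hVlt : volume B < ⊤ := measure_ball_lt_top
    set V : ℝ := (volume B).toReal with hVdef
    have hV0 : 0 < V :=
      ENNReal.toReal_pos (Metric.measure_ball_pos volume x hρ).ne' hVlt.ne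
    have hfB : IntegrableOn f B volume :=
      (hf.integrableOn_isCompact (isCompact_closedBall x ρ)).mono_set
        Metric.ball_subset_closedBall
    have hN : ∀ c : EuclideanSpace ℝ (Fin n),
        IntegrableOn (fun y => ‖f y - c‖) B volume := fun c =>
      (hfB.sub (integrableOn_const hVlt.ne)).norm
    have hP : ∀ c : EuclideanSpace ℝ (Fin n),
        IntegrableOn (fun y => ‖f y - c‖ ^ γ₀) B volume := by
      intro c
      refine Integrable.mono ((integrableOn_const hVlt.ne :
          IntegrableOn (fun _ => (1 : ℝ)) B volume).add (hN c)) ?_ ?_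
      · exact (Real.continuous_rpow_const hγ₀.le).comp_aestronglyMeasurable
          (hN c).aestronglyMeasurable
      · filter_upwards with y
        have ht : (0:ℝ) ≤ ‖f y - c‖ := norm_nonneg _
        have h1 := rpow_le_eps hγ₀ hγ₁ one_pos ht
        simp only [Real.one_rpow, one_mul] at h1
        have h2 : 0 ≤ ‖f y - c‖ ^ γ₀ := Real.rpow_nonneg ht _
        simp only [Pi.add_apply]
        rw [Real.norm_of_nonneg h2, Real.norm_of_nonneg (by linarith : (0:ℝ) ≤ 1 + ‖f y - c‖)]
        exact h1
    -- triangle inequality step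
    have hpt : ∀ y, ‖q ρ - f x‖ ^ γ₀ ≤ ‖f y - q ρ‖ ^ γ₀ + ‖f y - f x‖ ^ γ₀ := by
      intro y
      have h1 : ‖q ρ - f x‖ ≤ ‖f y - q ρ‖ + ‖f y - f x‖ := by
        have := norm_sub_le (f y - f x) (f y - q ρ)
        simp only [sub_sub_sub_cancel_left] at this
        calc ‖q ρ - f x‖ = ‖(f y - f x) - (f y - q ρ)‖ := by rw [sub_sub_sub_cancel_left]
          _ ≤ ‖f y - f x‖ + ‖f y - q ρ‖ := norm_sub_le _ _
          _ = ‖f y - q ρ‖ + ‖f y - f x‖ := add_comm _ _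
      calc ‖q ρ - f x‖ ^ γ₀ ≤ (‖f y - q ρ‖ + ‖f y - f x‖) ^ γ₀ :=
            Real.rpow_le_rpow (norm_nonneg _) h1 hγ₀.le
        _ ≤ ‖f y - q ρ‖ ^ γ₀ + ‖f y - f x‖ ^ γ₀ :=
            real_rpow_add_le_add_rpow (norm_nonneg _) (norm_nonneg _) hγ₀.le hγ₁.le
    have s1 : ‖q ρ - f x‖ ^ γ₀ * V ≤
        (∫ y in B, ‖f y - q ρ‖ ^ γ₀) + ∫ y in B, ‖f y - f x‖ ^ γ₀ := by
      have hconst : ∫ _ in B, ‖q ρ - f x‖ ^ γ₀ ∂volume = ‖q ρ - f x‖ ^ γ₀ * V := by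
        rw [setIntegral_const, smul_eq_mul, mul_comm]; rfl
      have hmono : ∫ _ in B, ‖q ρ - f x‖ ^ γ₀ ∂volume ≤
          ∫ y in B, (‖f y - q ρ‖ ^ γ₀ + ‖f y - f x‖ ^ γ₀) :=
        integral_mono (integrableOn_const hVlt.ne) ((hP _).add (hP _)) fun y => hpt y
      rw [hconst] at hmono
      rwa [integral_add (hP _) (hP _)] at hmono
    have s2 : (∫ y in B, ‖f y - q ρ‖ ^ γ₀) ≤ ∫ y in B, ‖f y - f x‖ ^ γ₀ :=
      hq ρ hρ hρρ₀ (f x)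
    have s3 : (∫ y in B, ‖f y - f x‖ ^ γ₀) ≤
        ε ^ γ₀ * V + ε ^ (γ₀ - 1) * ∫ y in B, ‖f y - f x‖ := by
      have hmono : (∫ y in B, ‖f y - f x‖ ^ γ₀) ≤
          ∫ y in B, (ε ^ γ₀ + ε ^ (γ₀ - 1) * ‖f y - f x‖) :=
        integral_mono (hP _) ((integrableOn_const hVlt.ne).add ((hN _).const_mul _))
          fun y => rpow_le_eps hγ₀ hγ₁ hε (norm_nonneg _)
      rwa [integral_add (integrableOn_const (C := ε ^ γ₀) hVlt.ne) ((hN _).const_mul _),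
        setIntegral_const, measureReal_def, ← hVdef, smul_eq_mul, mul_comm V, integral_const_mul] at hmono
    have havg : (⨍ y in B, ‖f y - f x‖) = V⁻¹ * ∫ y in B, ‖f y - f x‖ := by
      rw [setAverage_eq, smul_eq_mul]; rfl
    have hIV : (∫ y in B, ‖f y - f x‖) = V * ⨍ y in B, ‖f y - f x‖ := by
      rw [havg]; field_simp
    have : ‖q ρ - f x‖ ^ γ₀ * V ≤
        (2 * ε ^ γ₀ + 2 * ε ^ (γ₀ - 1) * ⨍ y in B, ‖f y - f x‖) * V := by
      have := s1.trans (by linarith : (∫ y in B, ‖f y - q ρ‖ ^ γ₀) +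
        (∫ y in B, ‖f y - f x‖ ^ γ₀) ≤ 2 * (ε ^ γ₀ * V + ε ^ (γ₀ - 1) * ∫ y in B, ‖f y - f x‖))
      rw [hIV] at this
      ring_nf
      ring_nf at this
      linarith
    exact le_of_mul_le_mul_right this hV0
  -- conclude
  rw [Metric.tendsto_nhds]
  intro δ hδ
  have hδγ : 0 < δ ^ γ₀ := Real.rpow_pos_of_pos hδ _
  set ε : ℝ := (δ ^ γ₀ / 4) ^ (1 / γ₀) with hεdef
  have hε : 0 < ε := Real.rpow_pos_of_pos (by linarith) _
  have hεγ : ε ^ γ₀ = δ ^ γ₀ / 4 := by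
    rw [hεdef, ← Real.rpow_mul (by positivity), one_div, inv_mul_cancel₀ hγ₀.ne', Real.rpow_one]
  have hεp : 0 < ε ^ (γ₀ - 1) := Real.rpow_pos_of_pos hε _
  set c₀ : ℝ := δ ^ γ₀ / (4 * ε ^ (γ₀ - 1)) with hc₀def
  have hc₀ : 0 < c₀ := by positivity
  filter_upwards [Ioo_mem_nhdsGT hρ₀, hx.eventually_lt_const hc₀] with ρ hρ hg
  have hkey := key ρ hρ.1 hρ.2 ε hε
  have hlt : ‖q ρ - f x‖ ^ γ₀ < δ ^ γ₀ := by
    have h2 : 2 * ε ^ (γ₀ - 1) * (⨍ y in Metric.ball x ρ, ‖f y - f x‖) <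
        2 * ε ^ (γ₀ - 1) * c₀ := by
      exact mul_lt_mul_of_pos_left hg (by positivity)
    have h3 : 2 * ε ^ (γ₀ - 1) * c₀ = δ ^ γ₀ / 2 := by
      rw [hc₀def]; field_simp; ring
    rw [hεγ] at hkey
    linarith
  by_contra hcon
  push_neg at hcon
  rw [dist_eq_norm] at hcon
  exact absurd (Real.rpow_le_rpow hδ.le hcon hγ₀.le) (not_le.2 hlt)
end

section
/- Let n ≥ 2, let μ be a finite Borel measure on ℝⁿ, let x ∈ ℝⁿ, R > 0 and ε ∈ (0,1), and set r_j = ε^j·R for integers j ≥ 0. Then there exists a constant C > 0, depending only on n, i_a and ε, such that Σ_{j=1}^∞ ( g⁻¹( μ(B_{2r_j}(x)) / r_j^{n−1} ) )^{i_a} ≤ C · ∫_0^{2R} ( g⁻¹( μ(B_ρ(x)) / ρ^{n−1} ) )^{i_a} dρ/ρ, the inequality holding in the extended reals. -/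
open MeasureTheory Real Set Filter
open scoped ENNReal

/-- Growth lemma: if `ia ≤ t g'(t)/g(t)` on `(0,∞)` then `g(c u) ≤ c^ia g(u)`
for `0 < c ≤ 1`, `u > 0`. -/
lemma stmt14_growth {ia : ℝ} (hia : 0 < ia) (g g' : ℝ → ℝ)
    (hder : ∀ t > (0:ℝ), HasDerivAt g (g' t) t)
    (hpos : ∀ t > (0:ℝ), 0 < g t)
    (hlow : ∀ t > (0:ℝ), ia ≤ t * g' t / g t) :
    ∀ c u : ℝ, 0 < c → c ≤ 1 → 0 < u → g (c * u) ≤ c ^ ia * g u := by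
  intro c u hc hc1 hu
  set ψ : ℝ → ℝ := fun t => Real.log (g t) - ia * Real.log t with hψ
  have hψder : ∀ t ∈ Set.Ioi (0:ℝ), HasDerivAt ψ (g' t / g t - ia * t⁻¹) t := by
    intro t ht
    have ht : (0:ℝ) < t := ht
    have h1 : HasDerivAt (fun s => Real.log (g s)) (g' t / g t) t := by
      simpa using (hder t ht).log (ne_of_gt (hpos t ht))
    have h2 : HasDerivAt (fun s => ia * Real.log s) (ia * t⁻¹) t :=
      (Real.hasDerivAt_log (ne_of_gt ht)).const_mul ia
    exact h1.sub h2
  have hmono : MonotoneOn ψ (Set.Ioi 0) := by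
    apply monotoneOn_of_deriv_nonneg (convex_Ioi 0)
    · intro t ht
      exact (hψder t ht).continuousAt.continuousWithinAt
    · intro t ht
      rw [interior_Ioi] at ht
      exact (hψder t ht).differentiableAt.differentiableWithinAt
    · intro t ht
      rw [interior_Ioi] at ht
      have ht' : (0:ℝ) < t := ht
      rw [(hψder t ht).deriv]
      have hg := hpos t ht'
      have h2 : ia * g t ≤ t * g' t := (le_div_iff₀ hg).mp (hlow t ht')
      have h3 : ia / t ≤ g' t / g t := by
        rw [div_le_div_iff₀ ht' hg]; nlinarith
      rw [← div_eq_mul_inv]; linarith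
  have hcu : (0:ℝ) < c * u := by positivity
  have hψle : ψ (c * u) ≤ ψ u :=
    hmono (Set.mem_Ioi.mpr hcu) (Set.mem_Ioi.mpr hu)
      (by nlinarith)
  have hlog : Real.log (g (c * u)) ≤ Real.log (g u) + ia * Real.log c := by
    have : Real.log (c * u) = Real.log c + Real.log u := Real.log_mul hc.ne' hu.ne'
    simp only [hψ, this] at hψle
    linarith [hψle]
  have := (Real.log_le_iff_le_exp (hpos _ hcu)).mp hlog
  rw [Real.exp_add, Real.exp_log (hpos u hu), mul_comm ia (Real.log c),
    ← Real.rpow_def_of_pos hc] at this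
  linarith [this]
/-- With `r_j = ε^j R`, the dyadic sum
`Σ_{j=1}^∞ (g⁻¹(μ(B_{2r_j}(x))/r_j^{n−1}))^{i_a}` is controlled by the truncated Wolff
potential `∫_0^{2R} (g⁻¹(μ(B_ρ(x))/ρ^{n−1}))^{i_a} dρ/ρ`, up to a constant depending only
on `n`, `i_a` and `ε` (inequality in the extended reals). -/
theorem stmt14 (n : ℕ) (hn : 2 ≤ n) (ia sa ε : ℝ)
    (hia : 0 < ia) (hisa : ia ≤ sa) (hsa : sa < 1) (hε : 0 < ε) (hε1 : ε < 1) :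
    ∃ C > (0:ℝ), ∀ (g g' ginv : ℝ → ℝ),
      ContinuousOn g (Set.Ici 0) →
      (∀ t > (0:ℝ), HasDerivAt g (g' t) t) →
      ContinuousOn g' (Set.Ici 0) →
      (∀ t ≥ (0:ℝ), 0 ≤ g t) →
      (∀ t > (0:ℝ), 0 < g t) →
      (∀ t > (0:ℝ), ia ≤ t * g' t / g t ∧ t * g' t / g t ≤ sa) →
      Set.InvOn ginv g (Set.Ici 0) (Set.Ici 0) →
      Set.MapsTo ginv (Set.Ici 0) (Set.Ici 0) →
      ∀ (μ : Measure (EuclideanSpace ℝ (Fin n))), IsFiniteMeasure μ →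
      ∀ (x : EuclideanSpace ℝ (Fin n)) (R : ℝ), 0 < R →
        (∑' j : ℕ, ENNReal.ofReal
            ((ginv ((μ (Metric.ball x (2 * (ε ^ (j + 1) * R)))).toReal /
              (ε ^ (j + 1) * R) ^ (n - 1))) ^ ia)) ≤
          ENNReal.ofReal C *
            ∫⁻ ρ in Set.Ioc (0:ℝ) (2 * R),
              ENNReal.ofReal ((ginv ((μ (Metric.ball x ρ)).toReal / ρ ^ (n - 1))) ^ ia / ρ) := by
  have h1ε : (0:ℝ) < 1 - ε := by linarith
  refine ⟨(2/ε)^(n-1)/(1-ε), by positivity, ?_⟩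
  intro g g' ginv hgc hgd hg'c hgnn hgpos hbnd hinv hmaps μ hμ x R hR
  set K : ℝ := (ε/2)^(n-1) with hKdef
  have hK : 0 < K := by positivity
  have hK1 : K ≤ 1 := pow_le_one₀ (by positivity) (by linarith)
  set c : ℝ := K ^ (1/ia) with hcdef
  have hc : 0 < c := Real.rpow_pos_of_pos hK _
  have hc1 : c ≤ 1 := Real.rpow_le_one hK.le hK1 (by positivity)
  have hcK : c ^ ia = K := by
    rw [hcdef, ← Real.rpow_mul hK.le, one_div, inv_mul_cancel₀ hia.ne', Real.rpow_one]
  -- g is strictly monotone on [0,∞)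
  have hg'pos : ∀ t > (0:ℝ), 0 < g' t := by
    intro t ht
    have hg := hgpos t ht
    have h2 : ia * g t ≤ t * g' t := (le_div_iff₀ hg).mp (hbnd t ht).1
    nlinarith [mul_pos hia hg]
  have hgsm : StrictMonoOn g (Set.Ici 0) := by
    apply strictMonoOn_of_deriv_pos (convex_Ici 0) hgc
    intro t ht
    rw [interior_Ici] at ht
    rw [(hgd t ht).deriv]
    exact hg'pos t ht
  have hginv_mono : ∀ s t : ℝ, 0 ≤ s → s ≤ t → ginv s ≤ ginv t := by
    intro s t hs hst
    by_contra hcon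
    push_neg at hcon
    have h1 : g (ginv t) < g (ginv s) :=
      hgsm (hmaps (Set.mem_Ici.mpr (hs.trans hst))) (hmaps (Set.mem_Ici.mpr hs)) hcon
    rw [hinv.2 (Set.mem_Ici.mpr (hs.trans hst)), hinv.2 (Set.mem_Ici.mpr hs)] at h1
    linarith
  -- key: ginv(K s) ≥ c ginv(s)
  have key : ∀ s : ℝ, 0 ≤ s → c * ginv s ≤ ginv (K * s) := by
    intro s hs
    have hu0 : 0 ≤ ginv s := hmaps (Set.mem_Ici.mpr hs)
    have hKs0 : 0 ≤ K * s := mul_nonneg hK.le hs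
    rcases eq_or_lt_of_le hu0 with h0 | hupos
    · rw [← h0, mul_zero]
      exact hmaps (Set.mem_Ici.mpr hKs0)
    · have h1 : g (c * ginv s) ≤ c ^ ia * g (ginv s) :=
        stmt14_growth hia g g' hgd hgpos (fun t ht => (hbnd t ht).1) c _ hc hc1 hupos
      rw [hinv.2 (Set.mem_Ici.mpr hs), hcK] at h1
      have hcu : 0 < c * ginv s := mul_pos hc hupos
      have h2 : ginv (g (c * ginv s)) ≤ ginv (K * s) :=
        hginv_mono _ _ (hgnn _ hcu.le) h1
      rwa [hinv.1 (Set.mem_Ici.mpr hcu.le)] at h2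
  -- notation
  set a : ℕ → ℝ := fun j => 2 * (ε ^ j * R) with hadef
  have ha : ∀ j, 0 < a j := fun j => by rw [hadef]; positivity
  have haε : ∀ j, a (j+1) = ε * a j := by intro j; rw [hadef]; ring
  have hasucc : ∀ j, a (j+1) = 2 * (ε ^ (j+1) * R) := fun j => rfl
  set f : ℝ → ℝ≥0∞ := fun ρ =>
    ENNReal.ofReal ((ginv ((μ (Metric.ball x ρ)).toReal / ρ ^ (n - 1))) ^ ia / ρ) with hfdef
  set m : ℕ → ℝ := fun j => (μ (Metric.ball x (a (j+1)))).toReal with hmdef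
  have hm0 : ∀ j, 0 ≤ m j := fun j => ENNReal.toReal_nonneg
  set u : ℕ → ℝ := fun j => ginv (m j / (ε ^ (j+1) * R) ^ (n-1)) with hudef
  have hsj0 : ∀ j, 0 ≤ m j / (ε ^ (j+1) * R) ^ (n-1) := by
    intro j
    have := hm0 j
    positivity
  have hu0 : ∀ j, 0 ≤ u j := fun j => hmaps (Set.mem_Ici.mpr (hsj0 j))
  -- the key algebraic identity
  have hKs : ∀ j, K * (m j / (ε ^ (j+1) * R) ^ (n-1)) = m j / (a j) ^ (n-1) := by
    intro j
    have h1 : a j * (ε/2) = ε ^ (j+1) * R := by rw [hadef]; ring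
    have h2 : (a j) ^ (n-1) * K = (ε ^ (j+1) * R) ^ (n-1) := by
      rw [hKdef, ← mul_pow, h1]
    rw [← h2]
    have h3 : (a j) ^ (n-1) ≠ 0 := by positivity
    field_simp
  -- pointwise bound on each annulus
  have hpoint : ∀ j, ∀ ρ ∈ Set.Ioc (a (j+1)) (a j),
      ENNReal.ofReal (K * (u j) ^ ia / a j) ≤ f ρ := by
    intro j ρ hρ
    obtain ⟨hρ1, hρ2⟩ := hρ
    have hρ0 : (0:ℝ) < ρ := (ha (j+1)).trans hρ1
    apply ENNReal.ofReal_le_ofReal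
    have hmρ : m j ≤ (μ (Metric.ball x ρ)).toReal :=
      ENNReal.toReal_mono (measure_ne_top μ _)
        (measure_mono (Metric.ball_subset_ball hρ1.le))
    have hpow : ρ ^ (n-1) ≤ (a j) ^ (n-1) := pow_le_pow_left₀ hρ0.le hρ2 _
    have hpow0 : (0:ℝ) < ρ ^ (n-1) := pow_pos hρ0 _
    have hsρ0 : 0 ≤ (μ (Metric.ball x ρ)).toReal / ρ ^ (n-1) := by positivity
    have hs : K * (m j / (ε ^ (j+1) * R) ^ (n-1)) ≤
        (μ (Metric.ball x ρ)).toReal / ρ ^ (n-1) := by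
      rw [hKs j]
      exact div_le_div₀ ENNReal.toReal_nonneg hmρ hpow0 hpow
    have h2 : c * u j ≤ ginv ((μ (Metric.ball x ρ)).toReal / ρ ^ (n-1)) :=
      (key _ (hsj0 j)).trans (hginv_mono _ _ (mul_nonneg hK.le (hsj0 j)) hs)
    have hcu0 : 0 ≤ c * u j := mul_nonneg hc.le (hu0 j)
    have h3 : K * (u j) ^ ia ≤ (ginv ((μ (Metric.ball x ρ)).toReal / ρ ^ (n-1))) ^ ia := by
      calc K * (u j) ^ ia = (c * u j) ^ ia := by
            rw [Real.mul_rpow hc.le (hu0 j), hcK]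
        _ ≤ _ := Real.rpow_le_rpow hcu0 h2 hia.le
    exact div_le_div₀ (Real.rpow_nonneg (hmaps (Set.mem_Ici.mpr hsρ0)) ia) h3 hρ0 hρ2
  -- per-annulus integral bound
  have hintj : ∀ j, ENNReal.ofReal ((u j) ^ ia) * ENNReal.ofReal (K * (1-ε)) ≤
      ∫⁻ ρ in Set.Ioc (a (j+1)) (a j), f ρ := by
    intro j
    have hmeas : MeasurableSet (Set.Ioc (a (j+1)) (a j)) := measurableSet_Ioc
    have huj : 0 ≤ (u j) ^ ia := Real.rpow_nonneg (hu0 j) ia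
    have hconst0 : 0 ≤ K * (u j) ^ ia / a j := by
      apply div_nonneg (mul_nonneg hK.le huj) (ha j).le
    calc ENNReal.ofReal ((u j) ^ ia) * ENNReal.ofReal (K * (1-ε))
        = ENNReal.ofReal (K * (u j) ^ ia / a j) * volume (Set.Ioc (a (j+1)) (a j)) := by
          rw [Real.volume_Ioc, ← ENNReal.ofReal_mul huj, ← ENNReal.ofReal_mul hconst0]
          congr 1
          rw [haε j]
          field_simp [(ha j).ne']
      _ = ∫⁻ _ in Set.Ioc (a (j+1)) (a j), ENNReal.ofReal (K * (u j) ^ ia / a j) :=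
          (setLIntegral_const _ _).symm
      _ ≤ ∫⁻ ρ in Set.Ioc (a (j+1)) (a j), f ρ := by
          rw [← lintegral_indicator hmeas, ← lintegral_indicator hmeas]
          apply lintegral_mono
          intro ρ
          by_cases hρ : ρ ∈ Set.Ioc (a (j+1)) (a j)
          · simpa [Set.indicator_of_mem hρ] using hpoint j ρ hρ
          · simp [Set.indicator_of_notMem hρ]
  -- disjointness and inclusion
  have hanti : ∀ i k : ℕ, i ≤ k → a k ≤ a i := by
    intro i k hik
    have h := pow_le_pow_of_le_one hε.le hε1.le hik
    show 2 * (ε ^ k * R) ≤ 2 * (ε ^ i * R)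
    nlinarith
  have hdisj : Pairwise (Function.onFun Disjoint fun j => Set.Ioc (a (j+1)) (a j)) := by
    intro i k hik
    rcases lt_or_gt_of_ne hik with h | h
    · exact Set.Ioc_disjoint_Ioc.mpr
        ((min_le_right _ _).trans ((hanti (i+1) k h).trans (le_max_left _ _)))
    · exact Set.Ioc_disjoint_Ioc.mpr
        ((min_le_left _ _).trans ((hanti (k+1) i h).trans (le_max_right _ _)))
  have hsub : (⋃ j, Set.Ioc (a (j+1)) (a j)) ⊆ Set.Ioc 0 (2*R) := by
    apply Set.iUnion_subset
    intro j ρ hρ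
    refine ⟨(ha (j+1)).trans hρ.1, hρ.2.trans ?_⟩
    have h := pow_le_one₀ hε.le hε1.le (n := j)
    show 2 * (ε ^ j * R) ≤ 2 * R
    nlinarith
  -- main chain
  have hmain : (∑' j : ℕ, ENNReal.ofReal ((u j) ^ ia)) * ENNReal.ofReal (K * (1-ε)) ≤
      ∫⁻ ρ in Set.Ioc (0:ℝ) (2*R), f ρ := by
    calc (∑' j : ℕ, ENNReal.ofReal ((u j) ^ ia)) * ENNReal.ofReal (K * (1-ε))
        = ∑' j : ℕ, ENNReal.ofReal ((u j) ^ ia) * ENNReal.ofReal (K * (1-ε)) :=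
          ENNReal.tsum_mul_right.symm
      _ ≤ ∑' j : ℕ, ∫⁻ ρ in Set.Ioc (a (j+1)) (a j), f ρ := ENNReal.tsum_le_tsum hintj
      _ = ∫⁻ ρ in ⋃ j, Set.Ioc (a (j+1)) (a j), f ρ :=
          (lintegral_iUnion (fun _ => measurableSet_Ioc) hdisj f).symm
      _ ≤ ∫⁻ ρ in Set.Ioc (0:ℝ) (2*R), f ρ := lintegral_mono_set hsub
  have hTeq : (∑' j : ℕ, ENNReal.ofReal
      ((ginv ((μ (Metric.ball x (2 * (ε ^ (j + 1) * R)))).toReal /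
        (ε ^ (j + 1) * R) ^ (n - 1))) ^ ia)) = ∑' j : ℕ, ENNReal.ofReal ((u j) ^ ia) := by
    apply tsum_congr
    intro j
    rfl
  rw [hTeq]
  have hone : ENNReal.ofReal (K * (1-ε)) * ENNReal.ofReal ((2/ε)^(n-1)/(1-ε)) = 1 := by
    rw [← ENNReal.ofReal_mul (by positivity)]
    have h2 : K * (2/ε)^(n-1) = 1 := by
      rw [hKdef, ← mul_pow]
      have : ε/2 * (2/ε) = 1 := by field_simp
      rw [this, one_pow]
    have h3 : K * (1-ε) * ((2/ε)^(n-1)/(1-ε)) = K * (2/ε)^(n-1) * ((1-ε)/(1-ε)) := by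
      ring
    rw [h3, div_self h1ε.ne', h2, one_mul, ENNReal.ofReal_one]
  calc (∑' j : ℕ, ENNReal.ofReal ((u j) ^ ia))
      = (∑' j : ℕ, ENNReal.ofReal ((u j) ^ ia)) *
        (ENNReal.ofReal (K * (1-ε)) * ENNReal.ofReal ((2/ε)^(n-1)/(1-ε))) := by
        rw [hone, mul_one]
    _ = ((∑' j : ℕ, ENNReal.ofReal ((u j) ^ ia)) * ENNReal.ofReal (K * (1-ε))) *
        ENNReal.ofReal ((2/ε)^(n-1)/(1-ε)) := by ring
    _ ≤ (∫⁻ ρ in Set.Ioc (0:ℝ) (2*R), f ρ) * ENNReal.ofReal ((2/ε)^(n-1)/(1-ε)) :=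
        mul_le_mul_left hmain _
    _ = ENNReal.ofReal ((2/ε)^(n-1)/(1-ε)) * ∫⁻ ρ in Set.Ioc (0:ℝ) (2*R), f ρ := mul_comm _ _
end

section
/- Let ε ∈ (0,1), ρ > 0, c₁ > 0, and let f : (0,ρ] → [0,∞) be measurable and satisfy c₁·f(t) ≤ f(s) whenever 0 < ε·t ≤ s ≤ t ≤ ρ. Then Σ_{j=0}^∞ f(ε^j·ρ) ≤ (c₁·ln(1/ε))^{-1} · ∫_0^ρ f(t)/t dt, the inequality holding in the extended reals. -/
open MeasureTheory Real Set Filter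
open scoped ENNReal

lemma lint_one_div (a b : ℝ) (ha : 0 < a) (hab : a ≤ b) :
    ∫⁻ t in Set.Ioc a b, ENNReal.ofReal (1 / t) =
      ENNReal.ofReal (Real.log b - Real.log a) := by
  have hb : 0 < b := lt_of_lt_of_le ha hab
  have hcont : ContinuousOn (fun t : ℝ => 1 / t) (Set.Icc a b) := by
    apply ContinuousOn.div continuousOn_const continuousOn_id
    intro x hx; exact ne_of_gt (lt_of_lt_of_le ha hx.1)
  have hint : IntegrableOn (fun t : ℝ => 1 / t) (Set.Ioc a b) volume :=
    (hcont.integrableOn_Icc).mono_set Set.Ioc_subset_Icc_self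
  rw [← ofReal_integral_eq_lintegral_ofReal hint]
  · congr 1
    rw [← intervalIntegral.integral_of_le hab]
    rw [integral_one_div]
    · rw [Real.log_div (ne_of_gt hb) (ne_of_gt ha)]
    · intro h
      rcases Set.mem_uIcc.1 h with ⟨h1, _⟩ | ⟨h2, _⟩
      · exact absurd h1 (not_le.2 ha)
      · exact absurd h2 (not_le.2 hb)
  · filter_upwards [ae_restrict_mem measurableSet_Ioc] with t ht
    exact le_of_lt (div_pos one_pos (lt_trans ha ht.1))

/-- If `c₁ f(t) ≤ f(s)` whenever `0 < ε t ≤ s ≤ t ≤ ρ`, then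
`Σ_{j=0}^∞ f(ε^j ρ) ≤ (c₁ ln(1/ε))⁻¹ ∫_0^ρ f(t)/t dt` (in the extended reals). -/
theorem stmt15 (ε ρ c₁ : ℝ) (hε : 0 < ε) (hε1 : ε < 1) (hρ : 0 < ρ) (hc₁ : 0 < c₁)
    (f : ℝ → ℝ) (hf_meas : Measurable f)
    (hf_nonneg : ∀ t : ℝ, 0 < t → t ≤ ρ → 0 ≤ f t)
    (hdec : ∀ t s : ℝ, 0 < ε * t → ε * t ≤ s → s ≤ t → t ≤ ρ → c₁ * f t ≤ f s) :
    (∑' j : ℕ, ENNReal.ofReal (f (ε ^ j * ρ))) ≤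
      ENNReal.ofReal (1 / (c₁ * Real.log (1 / ε))) *
        ∫⁻ t in Set.Ioc (0:ℝ) ρ, ENNReal.ofReal (f t / t) := by
  set L : ℝ := Real.log (1 / ε) with hLdef
  have hL : 0 < L := Real.log_pos (by rw [one_div]; exact (one_lt_inv₀ hε).2 hε1)
  set a : ℕ → ℝ := fun j => ε ^ j * ρ with hadef
  have ha_pos : ∀ j, 0 < a j := fun j => mul_pos (pow_pos hε j) hρ
  have ha_le : ∀ j, a j ≤ ρ := by
    intro j
    calc a j ≤ 1 * ρ := mul_le_mul_of_nonneg_right (pow_le_one₀ hε.le hε1.le) hρ.le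
    _ = ρ := one_mul ρ
  have ha_succ : ∀ j, a (j + 1) = ε * a j := by
    intro j; simp [hadef, pow_succ]; ring
  have ha_anti : StrictAnti a := by
    intro i j hij
    exact mul_lt_mul_of_pos_right (pow_lt_pow_right_of_lt_one₀ hε hε1 hij) hρ
  -- key estimate on each interval
  have key : ∀ j : ℕ, ENNReal.ofReal (c₁ * L) * ENNReal.ofReal (f (a j)) ≤
      ∫⁻ t in Set.Ioc (a (j + 1)) (a j), ENNReal.ofReal (f t / t) := by
    intro j
    have hfj : 0 ≤ f (a j) := hf_nonneg _ (ha_pos j) (ha_le j)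
    have hstep : ∀ t ∈ Set.Ioc (a (j + 1)) (a j),
        ENNReal.ofReal (c₁ * f (a j)) * ENNReal.ofReal (1 / t) ≤
          ENNReal.ofReal (f t / t) := by
      intro t ht
      have ht0 : 0 < t := lt_trans (ha_pos (j + 1)) ht.1
      have hft : c₁ * f (a j) ≤ f t := by
        apply hdec (a j) t
        · rw [← ha_succ]; exact ha_pos (j + 1)
        · rw [← ha_succ]; exact ht.1.le
        · exact ht.2
        · exact ha_le j
      rw [← ENNReal.ofReal_mul (by positivity)]
      apply ENNReal.ofReal_le_ofReal
      rw [mul_one_div]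
      exact div_le_div_of_nonneg_right hft ht0.le
    calc ENNReal.ofReal (c₁ * L) * ENNReal.ofReal (f (a j))
        = ENNReal.ofReal (c₁ * f (a j)) * ENNReal.ofReal L := by
          rw [← ENNReal.ofReal_mul (by positivity), ← ENNReal.ofReal_mul (by positivity)]
          ring_nf
      _ = ENNReal.ofReal (c₁ * f (a j)) *
            ∫⁻ t in Set.Ioc (a (j + 1)) (a j), ENNReal.ofReal (1 / t) := by
          rw [lint_one_div _ _ (ha_pos (j + 1)) (ha_anti (Nat.lt_succ_self j)).le]
          congr 1
          rw [ha_succ, Real.log_mul (ne_of_gt hε) (ne_of_gt (ha_pos j))]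
          rw [hLdef, Real.log_div one_ne_zero (ne_of_gt hε), Real.log_one]
          ring
      _ = ∫⁻ t in Set.Ioc (a (j + 1)) (a j),
            ENNReal.ofReal (c₁ * f (a j)) * ENNReal.ofReal (1 / t) := by
          rw [lintegral_const_mul]
          exact (ENNReal.measurable_ofReal.comp (measurable_const.div measurable_id))
      _ ≤ ∫⁻ t in Set.Ioc (a (j + 1)) (a j), ENNReal.ofReal (f t / t) := by
          apply setLIntegral_mono
          · exact (hf_meas.div measurable_id).ennreal_ofReal
          · exact hstep
  -- sum over disjoint intervals
  have hdisj : Pairwise (Function.onFun Disjoint fun j => Set.Ioc (a (j + 1)) (a j)) := by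
    intro i j hij
    rcases hij.lt_or_gt with h | h
    · apply Set.Ioc_disjoint_Ioc.2
      exact le_trans (min_le_right _ _) (le_max_of_le_left (ha_anti.antitone (Nat.succ_le_of_lt h)))
    · apply Set.Ioc_disjoint_Ioc.2
      exact le_trans (min_le_left _ _) (le_max_of_le_right (ha_anti.antitone (Nat.succ_le_of_lt h)))
  have hsub : (⋃ j, Set.Ioc (a (j + 1)) (a j)) ⊆ Set.Ioc (0 : ℝ) ρ := by
    intro t ht
    rcases Set.mem_iUnion.1 ht with ⟨j, hj⟩
    exact ⟨lt_trans (ha_pos (j + 1)) hj.1, le_trans hj.2 (ha_le j)⟩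
  have hmain : ENNReal.ofReal (c₁ * L) * (∑' j : ℕ, ENNReal.ofReal (f (a j))) ≤
      ∫⁻ t in Set.Ioc (0 : ℝ) ρ, ENNReal.ofReal (f t / t) := by
    rw [← ENNReal.tsum_mul_left]
    calc (∑' j : ℕ, ENNReal.ofReal (c₁ * L) * ENNReal.ofReal (f (a j)))
        ≤ ∑' j : ℕ, ∫⁻ t in Set.Ioc (a (j + 1)) (a j), ENNReal.ofReal (f t / t) :=
          ENNReal.tsum_le_tsum key
      _ = ∫⁻ t in ⋃ j, Set.Ioc (a (j + 1)) (a j), ENNReal.ofReal (f t / t) :=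
          (lintegral_iUnion (fun j => measurableSet_Ioc) hdisj _).symm
      _ ≤ ∫⁻ t in Set.Ioc (0 : ℝ) ρ, ENNReal.ofReal (f t / t) :=
          lintegral_mono_set hsub
  have hc : ENNReal.ofReal (c₁ * L) ≠ 0 := by
    simp [ENNReal.ofReal_eq_zero, not_le]; positivity
  have hct : ENNReal.ofReal (c₁ * L) ≠ ⊤ := ENNReal.ofReal_ne_top
  have hinv : ENNReal.ofReal (1 / (c₁ * L)) = (ENNReal.ofReal (c₁ * L))⁻¹ := by
    rw [one_div, ENNReal.ofReal_inv_of_pos (by positivity)]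
  rw [hinv]
  calc (∑' j : ℕ, ENNReal.ofReal (f (ε ^ j * ρ)))
      = (ENNReal.ofReal (c₁ * L))⁻¹ *
          (ENNReal.ofReal (c₁ * L) * ∑' j : ℕ, ENNReal.ofReal (f (a j))) := by
        rw [← mul_assoc, ENNReal.inv_mul_cancel hc hct, one_mul]
    _ ≤ (ENNReal.ofReal (c₁ * L))⁻¹ *
          ∫⁻ t in Set.Ioc (0 : ℝ) ρ, ENNReal.ofReal (f t / t) :=
        mul_le_mul_right hmain _
end
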